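/- arXiv:0710.1183 — 9 statements merged into one kernel-verified Lean document; each statement's English description precedes it below -/
import Mathlib

section
/- Let G be a finite abelian group, S ⊆ G, H ≤ G a subgroup with S + H ≠ G, and suppose there exists g ∈ G with 2g ∈ S + H. Then the vertex connectivity of the addition Cayley graph Cay⁺(S) is at most |S+H| − |H|. -/
/-
Pick `g` with `g + g ∈ S + H` and put `T = -g + (S + H)` and `C = g + H`. Every neighbour
of the coset `C` in Cay⁺(S) lies in `T`, and `C ⊆ T` because `2g ∈ S + H`. Removing the
`|S + H| - |H|` vertices of `T \ C` therefore leaves `C` without edges to the rest of the graph,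
which is nonempty since some `b` lies outside `T` when `S + H ≠ G`.
-/

open Pointwise

/-- The addition Cayley graph induced by `S` on `G`. -/
def addCayley {G : Type*} [AddCommGroup G] (S : Set G) : SimpleGraph G where
  Adj a b := a ≠ b ∧ a + b ∈ S
  symm := by
    constructor
    intro a b h
    exact ⟨h.1.symm, by rw [add_comm]; exact h.2⟩
  loopless := by
    constructor
    intro a h
    exact h.1 rfl

/-- The vertex connectivity of a graph: the least number of vertices whose removal
disconnects the graph or leaves at most one vertex. -/
noncomputable def vertexConnectivity {V : Type*} (Γ : SimpleGraph V) : ℕ :=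
  sInf {k | ∃ s : Set V, s.ncard = k ∧
    ((sᶜ : Set V).ncard ≤ 1 ∨ ¬ (Γ.induce (sᶜ : Set V)).Connected)}


theorem SimpleGraph.Reachable.mem_of_adj_closed {V : Type*} {Γ : SimpleGraph V} {C : Set V}
    (hC : ∀ ⦃u v⦄, u ∈ C → Γ.Adj u v → v ∈ C) {u v : V} (h : Γ.Reachable u v) (hu : u ∈ C) :
    v ∈ C := by
  obtain ⟨w⟩ := h
  induction w with
  | nil => exact hu
  | cons hadj _ ih => exact ih (hC hu hadj)

theorem SimpleGraph.not_connected_induce_compl_of_adj_closed {V : Type*} {Γ : SimpleGraph V}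
    {s C : Set V} (hC : ∀ ⦃u v⦄, u ∈ C → Γ.Adj u v → v ∉ s → v ∈ C)
    {a b : V} (ha : a ∈ C) (has : a ∉ s) (hb : b ∉ C) (hbs : b ∉ s) :
    ¬ (Γ.induce sᶜ).Connected := fun hconn =>
  hb <| (hconn.preconnected ⟨a, has⟩ ⟨b, hbs⟩).mem_of_adj_closed (C := Subtype.val ⁻¹' C)
    (fun _ v hu huv => hC hu huv v.2) ha

theorem vertexConnectivity_le_ncard_of_not_connected {V : Type*} {Γ : SimpleGraph V} {s : Set V}
    (h : ¬ (Γ.induce sᶜ).Connected) : vertexConnectivity Γ ≤ s.ncard :=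
  Nat.sInf_le ⟨s, rfl, Or.inr h⟩

section addCayley

variable {G : Type*} [AddCommGroup G] {S : Set G} {H : AddSubgroup G}

theorem add_mem_add_addSubgroup {z h : G} (hz : z ∈ S + (H : Set G)) (hh : h ∈ H) :
    z + h ∈ S + (H : Set G) := by
  rw [← coe_add_coe H, ← add_assoc]
  exact Set.add_mem_add hz hh

theorem vadd_subset_neg_vadd_add_of_add_self_mem {g : G} (hg : g + g ∈ S + (H : Set G)) :
    g +ᵥ (H : Set G) ⊆ -g +ᵥ (S + (H : Set G)) := by
  intro u hu
  rw [Set.mem_vadd_set_iff_neg_vadd_mem] at hu ⊢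
  simpa [vadd_eq_add, add_add_neg_cancel'_right] using add_mem_add_addSubgroup hg hu

theorem mem_neg_vadd_add_of_addCayley_adj {g u v : G} (hu : u ∈ g +ᵥ (H : Set G))
    (huv : (addCayley S).Adj u v) : v ∈ -g +ᵥ (S + (H : Set G)) := by
  rw [Set.mem_vadd_set_iff_neg_vadd_mem] at hu ⊢
  have hS : u + v ∈ S + (H : Set G) := ⟨u + v, huv.2, 0, H.zero_mem, add_zero _⟩
  rw [neg_neg, vadd_eq_add, show g + v = u + v + -(-g +ᵥ u) by rw [vadd_eq_add]; abel]
  exact add_mem_add_addSubgroup hS (H.neg_mem hu)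

end addCayley

/-- If `H ≤ G` with `S + H ≠ G` and `2g ∈ S + H` for some `g`, then
`κ(Cay⁺(S)) ≤ |S+H| − |H|`. -/
theorem kappa_le_of_subgroup {G : Type*} [AddCommGroup G] [Fintype G]
    (S : Set G) (H : AddSubgroup G)
    (hSH : S + (H : Set G) ≠ Set.univ)
    (hg : ∃ g : G, g + g ∈ S + (H : Set G)) :
    vertexConnectivity (addCayley S) ≤ (S + (H : Set G)).ncard - (H : Set G).ncard := by
  obtain ⟨g, hgg⟩ := hg
  set T := -g +ᵥ (S + (H : Set G))
  set C := g +ᵥ (H : Set G)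
  have hgC : g ∈ C := ⟨0, H.zero_mem, add_zero g⟩
  have hCT : C ⊆ T := vadd_subset_neg_vadd_add_of_add_self_mem hgg
  obtain ⟨b, hbT⟩ : ∃ b, b ∉ T :=
    Set.ne_univ_iff_exists_notMem _ |>.1 <| by rwa [Ne, Set.vadd_set_eq_univ]
  have hdisc : ¬ ((addCayley S).induce (T \ C)ᶜ).Connected :=
    SimpleGraph.not_connected_induce_compl_of_adj_closed
      (fun _ _ hu huv hv => by_contra fun hvC =>
        hv ⟨mem_neg_vadd_add_of_addCayley_adj hu huv, hvC⟩)
      hgC (fun h => h.2 hgC) (fun h => hbT (hCT h)) (fun h => hbT h.1)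
  calc vertexConnectivity (addCayley S) ≤ (T \ C).ncard :=
        vertexConnectivity_le_ncard_of_not_connected hdisc
    _ = _ := by rw [Set.ncard_sdiff hCT, Set.ncard_vadd_set, Set.ncard_vadd_set]
end

section
/- Let L ≤ G₀ ≤ G be finite abelian groups such that G₀/L is a cyclic 2-group and 2∗(G/L) := {2x : x ∈ G/L} is a proper subgroup of G₀/L. Then exp(G₀/L) = exp(G/L). -/
/-!
Write `Q = G/L` and `H = G₀/L`. The doubles `2∗Q` form a proper subgroup of the cyclic group `H`
of order `2ᵏ`, so `2 · |2∗Q|` divides `|H| = exp H`. Since `2 · exp(2∗Q)` kills every element of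
`Q`, this gives `exp Q ∣ exp H`; the converse divisibility holds for any subgroup.
-/

open AddMonoid

theorem AddSubgroup.mul_card_dvd_card_of_lt {A : Type*} [AddGroup A] {p k : ℕ} (hp : p.Prime)
    {T H : AddSubgroup A} (hTH : T < H) (hH : Nat.card H = p ^ k) :
    p * Nat.card T ∣ Nat.card H := by
  have : Finite H := Nat.finite_of_card_ne_zero (by simp [hH, hp.ne_zero])
  obtain ⟨j, hjk, hj⟩ := (Nat.dvd_prime_pow hp).mp (hH ▸ AddSubgroup.card_dvd_of_le hTH.le)
  have hjk : j < k := by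
    refine hjk.lt_of_ne fun hjk => hTH.ne (AddSubgroup.eq_of_le_of_card_ge hTH.le ?_)
    rw [hH, hj, hjk]
  rw [hj, hH, ← pow_succ']
  exact pow_dvd_pow p hjk

theorem AddMonoid.exponent_dvd_two_mul_of_add_self_mem {A : Type*} [AddGroup A]
    {T : AddSubgroup A} (hT : ∀ x, x + x ∈ T) : exponent A ∣ 2 * exponent T :=
  exponent_dvd_of_forall_nsmul_eq_zero fun x => by
    rw [mul_nsmul, two_nsmul]
    exact AddSubgroup.nsmul_exponent_eq_zero (hT x)

theorem AddMonoidHom.coe_range_nsmul_two {A : Type*} [AddCommGroup A] :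
    ((nsmulAddMonoidHom 2 : A →+ A).range : Set A) = {x | ∃ y, x = y + y} := by
  ext x
  simp [two_nsmul, eq_comm]

theorem exponent_eq_of_cyclic_two_group_general {G : Type*} [AddCommGroup G]
    (L G₀ : AddSubgroup G)
    (hcyc : IsAddCyclic (G₀.map (QuotientAddGroup.mk' L)))
    (h2grp : ∃ k : ℕ, Nat.card (G₀.map (QuotientAddGroup.mk' L)) = 2 ^ k)
    (hsub : {x : G ⧸ L | ∃ y : G ⧸ L, x = y + y} ⊆ (G₀.map (QuotientAddGroup.mk' L) : Set (G ⧸ L)))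
    (hproper : {x : G ⧸ L | ∃ y : G ⧸ L, x = y + y} ≠ (G₀.map (QuotientAddGroup.mk' L) : Set (G ⧸ L))) :
    AddMonoid.exponent (G₀.map (QuotientAddGroup.mk' L)) = AddMonoid.exponent (G ⧸ L) := by
  obtain ⟨k, hk⟩ := h2grp
  set H := G₀.map (QuotientAddGroup.mk' L)
  set T := (nsmulAddMonoidHom 2 : G ⧸ L →+ G ⧸ L).range
  have hT : (T : Set (G ⧸ L)) = {x | ∃ y, x = y + y} := AddMonoidHom.coe_range_nsmul_two
  have hTH : T < H :=
    lt_of_le_of_ne (SetLike.coe_subset_coe.mp (hT ▸ hsub)) fun h => hproper (by rw [← hT, h])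
  refine Nat.dvd_antisymm (exponent_dvd_of_addMonoidHom H.subtype H.subtype_injective) ?_
  calc exponent (G ⧸ L) ∣ 2 * exponent T :=
        exponent_dvd_two_mul_of_add_self_mem fun x => ⟨x, two_nsmul x⟩
    _ ∣ 2 * Nat.card T := mul_dvd_mul_left 2 AddGroup.exponent_dvd_nat_card
    _ ∣ Nat.card H := AddSubgroup.mul_card_dvd_card_of_lt Nat.prime_two hTH hk
    _ = exponent H := IsAddCyclic.exponent_eq_card.symm

/-- If `L ≤ G₀ ≤ G` are finite abelian groups, `G₀/L` is a cyclic 2-group and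
`2∗(G/L)` is a proper subgroup of `G₀/L`, then `exp(G₀/L) = exp(G/L)`. -/
theorem exponent_eq_of_cyclic_two_group {G : Type*} [AddCommGroup G] [Fintype G]
    (L G₀ : AddSubgroup G) (hLG₀ : L ≤ G₀)
    (hcyc : IsAddCyclic (G₀.map (QuotientAddGroup.mk' L)))
    (h2grp : ∃ k : ℕ, Nat.card (G₀.map (QuotientAddGroup.mk' L)) = 2 ^ k)
    (hsub : {x : G ⧸ L | ∃ y : G ⧸ L, x = y + y} ⊆ (G₀.map (QuotientAddGroup.mk' L) : Set (G ⧸ L)))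
    (hproper : {x : G ⧸ L | ∃ y : G ⧸ L, x = y + y} ≠ (G₀.map (QuotientAddGroup.mk' L) : Set (G ⧸ L))) :
    AddMonoid.exponent (G₀.map (QuotientAddGroup.mk' L)) = AddMonoid.exponent (G ⧸ L) :=
  exponent_eq_of_cyclic_two_group_general L G₀ hcyc h2grp hsub hproper
end

section
/- Let S be a finite subset and H, L finite subgroups of an abelian group G with |L| ≤ |H| and S + H ≠ S + H + L. Set I := H ∩ L. If max{|S+H| − |H|, |S+L| − |L|} ≤ |S+I| − |I|, then |S+H| − |H| = |S+L| − |L| = |S+I| − |I|. -/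
open Pointwise

/-!
Passing to `G ⧸ (H ⊓ L)` divides all three quantities by `|H ⊓ L|`, so we may assume
`H ⊓ L = ⊥`. Pick `y = s + h + l ∈ S + H + L` outside `S + H` and let `A` be the part of `S`
in the coset `s + (H + L)`. If `A` meets `k` cosets of `H` and `r` cosets of `L`, then
`|A| ≤ k r` because `H ⊓ L = ⊥`, and `k < |L|` because the coset `y + H` lies in `s + (H + L)`
but misses `A`; the rest of `S` contributes at least its own size to both `S + H` and `S + L`.
The two assumed inequalities thus give `(k - 1) |H| + 1 ≤ k r` and `(r - 1) |L| + 1 ≤ k r`,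
and for `k < |L| ≤ |H|` these can only hold with equality.
-/

theorem Int.eq_of_sub_one_mul_add_one_le_mul {k r P Q : ℤ} (hk : 1 ≤ k) (hkQ : k < Q)
    (hQP : Q ≤ P) (hP : (k - 1) * P + 1 ≤ k * r) (hQ : (r - 1) * Q + 1 ≤ k * r) :
    k * r = (k - 1) * P + 1 ∧ k * r = (r - 1) * Q + 1 := by
  have hQk : 0 < Q - k := by linarith
  -- `((k - 1) Q + 1) (Q - k) = k (Q - 1) + (k - 1) Q (Q - k - 1)`, and `P ≥ Q`
  have hlow : k * (Q - 1) ≤ ((k - 1) * P + 1) * (Q - k) := by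
    nlinarith [mul_nonneg (mul_nonneg (sub_nonneg.2 hk) (by linarith : (0 : ℤ) ≤ Q))
      (by linarith : (0 : ℤ) ≤ Q - k - 1), mul_le_mul_of_nonneg_right
      (mul_le_mul_of_nonneg_left hQP (sub_nonneg.2 hk)) hQk.le]
  have hup : k * r * (Q - k) ≤ k * (Q - 1) := by nlinarith
  have hH : k * r = (k - 1) * P + 1 := by nlinarith
  refine ⟨hH, ?_⟩
  have : k * (r * (Q - k)) = k * (Q - 1) := by nlinarith
  have := mul_left_cancel₀ (by positivity : k ≠ 0) this
  linarith

section
variable {G : Type*} [AddCommGroup G]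

theorem AddSubgroup.ncard_add_eq_mul_ncard_image_mk (N : AddSubgroup G) (X : Set G) :
    (X + (N : Set G)).ncard = (N : Set G).ncard * ((↑) '' X : Set (G ⧸ N)).ncard := by
  simp only [← Nat.card_coe_set_eq]
  exact AddSubgroup.card_add_eq_card_addSubgroup_add_card_quotient N X

theorem AddSubgroup.coe_add_coe_of_le {N I : AddSubgroup G} (h : I ≤ N) :
    (N : Set G) + I = N := by
  rw [← AddSubgroup.add_normal, sup_eq_left.2 h]

theorem Set.ncard_inter_add_add_ncard_sdiff_le {S E : Set G} {N : AddSubgroup G}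
    (hS : S.Finite) (hN : (N : Set G).Finite) (hE : ∀ x ∈ E, ∀ n ∈ N, x + n ∈ E) :
    (S ∩ E + N).ncard + (S \ E).ncard ≤ (S + N).ncard := by
  have hdisj : Disjoint (S ∩ E + N) (S \ E + N) := by
    rw [Set.disjoint_left]
    rintro _ ⟨a, ha, n, hn, rfl⟩ ⟨b, hb, m, hm, hab⟩
    dsimp only at hab
    refine hb.2 ?_
    have := hE _ (hE a ha.2 n hn) (-m) (N.neg_mem hm)
    rwa [← hab, add_neg_cancel_right] at this
  have hsdiff : (S \ E).ncard ≤ (S \ E + N).ncard :=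
    Set.ncard_le_ncard (Set.subset_add_left _ N.zero_mem) ((hS.sdiff).add hN)
  rw [← Set.inter_union_sdiff S E, Set.union_add, Set.ncard_union_eq hdisj
    ((hS.inter_of_left E).add hN) ((hS.sdiff).add hN), Set.inter_union_sdiff]
  omega

theorem Set.ncard_le_ncard_image_mk_mul {H L : AddSubgroup G} (hHL : H ⊓ L = ⊥) {A : Set G}
    (hA : A.Finite) :
    A.ncard ≤ ((↑) '' A : Set (G ⧸ H)).ncard * ((↑) '' A : Set (G ⧸ L)).ncard := by
  have hinj : Function.Injective fun x : G ↦ ((x : G ⧸ H), (x : G ⧸ L)) := by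
    intro x y hxy
    simp only [Prod.mk.injEq, QuotientAddGroup.eq] at hxy
    have : -x + y ∈ H ⊓ L := hxy
    rw [hHL, AddSubgroup.mem_bot, neg_add_eq_zero] at this
    exact this
  rw [← Set.ncard_prod, ← Set.ncard_image_of_injective A hinj]
  refine Set.ncard_le_ncard ?_ ((hA.image _).prod (hA.image _))
  rintro _ ⟨x, hx, rfl⟩
  exact ⟨⟨x, hx, rfl⟩, ⟨x, hx, rfl⟩⟩

theorem Set.ncard_image_mk_lt {H L : AddSubgroup G} (hL : (L : Set G).Finite) {A : Set G}
    {s y : G} (hA : ∀ a ∈ A, a - s ∈ H ⊔ L) (hy : y - s ∈ H ⊔ L) (hyA : y ∉ A + H) :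
    ((↑) '' A : Set (G ⧸ H)).ncard < (L : Set G).ncard := by
  have hcoset : ∀ x, x - s ∈ H ⊔ L → (x : G ⧸ H) ∈ (fun l ↦ ((s + l : G) : G ⧸ H)) '' L := by
    intro x hx
    obtain ⟨h, hh, l, hl, hhl⟩ := AddSubgroup.mem_sup.1 hx
    obtain rfl := sub_eq_iff_eq_add.1 hhl.symm
    refine ⟨l, hl, QuotientAddGroup.eq.2 ?_⟩
    convert hh using 1
    abel
  have hsub : insert (y : G ⧸ H) ((↑) '' A) ⊆ (fun l ↦ ((s + l : G) : G ⧸ H)) '' L := by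
    rintro _ (rfl | ⟨a, ha, rfl⟩)
    · exact hcoset y hy
    · exact hcoset a (hA a ha)
  have hyA' : (y : G ⧸ H) ∉ ((↑) '' A : Set (G ⧸ H)) := by
    rwa [← Set.mem_preimage, QuotientAddGroup.preimage_image_mk_eq_add]
  have := (Set.ncard_le_ncard hsub (hL.image _)).trans (Set.ncard_image_le hL)
  rwa [Set.ncard_insert_of_notMem hyA' (((hL.image _).subset hsub).subset
    (Set.subset_insert _ _)), Nat.add_one_le_iff] at this

theorem ncard_add_sub_ncard_eq_of_inf_eq_bot {S : Set G} {H L : AddSubgroup G} (hS : S.Finite)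
    (hH : (H : Set G).Finite) (hL : (L : Set G).Finite) (hHL : H ⊓ L = ⊥)
    (hcard : (L : Set G).ncard ≤ (H : Set G).ncard)
    (hne : S + (H : Set G) ≠ S + H + L)
    (h₁ : ((S + (H : Set G)).ncard : ℤ) - (H : Set G).ncard ≤ S.ncard - 1)
    (h₂ : ((S + (L : Set G)).ncard : ℤ) - (L : Set G).ncard ≤ S.ncard - 1) :
    ((S + (H : Set G)).ncard : ℤ) - (H : Set G).ncard = S.ncard - 1 ∧
      ((S + (L : Set G)).ncard : ℤ) - (L : Set G).ncard = S.ncard - 1 := by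
  obtain ⟨y, hy, hyS⟩ : ∃ y ∈ S + (H : Set G) + L, y ∉ S + (H : Set G) :=
    Set.not_subset.1 fun h ↦ hne (h.antisymm' (Set.subset_add_left _ L.zero_mem))
  obtain ⟨_, ⟨s, hs, h, hh, rfl⟩, l, hl, rfl⟩ := hy
  set E : Set G := {x | x - s ∈ H ⊔ L}
  have hE : ∀ N ≤ H ⊔ L, ∀ x ∈ E, ∀ n ∈ N, x + n ∈ E := fun N hN x hx n hn ↦ by
    simpa [E, add_sub_right_comm] using add_mem hx (hN hn)
  set A := S ∩ E
  have hA : A.Finite := hS.inter_of_left E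
  set k := ((↑) '' A : Set (G ⧸ H)).ncard
  set r := ((↑) '' A : Set (G ⧸ L)).ncard
  have hSH : (H : Set G).ncard * k + (S \ E).ncard ≤ (S + H).ncard := by
    rw [← AddSubgroup.ncard_add_eq_mul_ncard_image_mk]
    exact Set.ncard_inter_add_add_ncard_sdiff_le hS hH (hE H le_sup_left)
  have hSL : (L : Set G).ncard * r + (S \ E).ncard ≤ (S + L).ncard := by
    rw [← AddSubgroup.ncard_add_eq_mul_ncard_image_mk]
    exact Set.ncard_inter_add_add_ncard_sdiff_le hS hL (hE L le_sup_right)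
  have hSA : A.ncard + (S \ E).ncard = S.ncard := Set.ncard_inter_add_ncard_sdiff_eq_ncard S E hS
  have hAkr : A.ncard ≤ k * r := Set.ncard_le_ncard_image_mk_mul hHL hA
  have hkL : k < (L : Set G).ncard := by
    refine Set.ncard_image_mk_lt hL (fun a ha ↦ ha.2) ?_
      fun hy ↦ hyS (Set.add_subset_add_right Set.inter_subset_left hy)
    simpa [add_assoc] using add_mem (AddSubgroup.mem_sup_left hh) (AddSubgroup.mem_sup_right hl)
  have hk : 1 ≤ k := (Set.ncard_pos (hA.image _)).2 ⟨_, s, ⟨hs, by simp [E]⟩, rfl⟩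
  zify at hSH hSL hSA hAkr hkL hk hcard
  obtain ⟨eH, eL⟩ := Int.eq_of_sub_one_mul_add_one_le_mul (r := r) hk hkL hcard (by linarith)
    (by linarith)
  constructor <;> linarith

end

section
variable {G : Type*} [AddCommGroup G] {I N : AddSubgroup G}

open QuotientAddGroup

theorem AddSubgroup.ncard_eq_mul_ncard_map_mk' (hIN : I ≤ N) :
    (N : Set G).ncard = (I : Set G).ncard * (N.map (mk' I) : Set (G ⧸ I)).ncard := by
  rw [AddSubgroup.coe_map, coe_mk', ← AddSubgroup.ncard_add_eq_mul_ncard_image_mk,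
    AddSubgroup.coe_add_coe_of_le hIN]

theorem AddSubgroup.ncard_add_eq_mul_ncard_add_map_mk' (S : Set G) (hIN : I ≤ N) :
    (S + (N : Set G)).ncard =
      (I : Set G).ncard * (mk' I '' S + (N.map (mk' I) : Set (G ⧸ I))).ncard := by
  rw [AddSubgroup.coe_map, ← Set.image_add, coe_mk', ← AddSubgroup.ncard_add_eq_mul_ncard_image_mk,
    add_assoc, AddSubgroup.coe_add_coe_of_le hIN]

theorem AddSubgroup.ncard_add_sub_ncard_eq_mul (S : Set G) (hIN : I ≤ N) :
    ((S + (N : Set G)).ncard : ℤ) - (N : Set G).ncard = (I : Set G).ncard *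
      (((mk' I '' S + (N.map (mk' I) : Set (G ⧸ I))).ncard : ℤ) -
        (N.map (mk' I) : Set (G ⧸ I)).ncard) := by
  rw [ncard_add_eq_mul_ncard_add_map_mk' S hIN, ncard_eq_mul_ncard_map_mk' hIN]
  push_cast
  ring

theorem AddSubgroup.map_mk'_inf_map_mk'_eq_bot (H L : AddSubgroup G) :
    H.map (mk' (H ⊓ L)) ⊓ L.map (mk' (H ⊓ L)) = ⊥ := by
  rw [← AddSubgroup.map_comap_eq_self_of_surjective (mk'_surjective _) (_ ⊓ _),
    AddSubgroup.comap_inf, AddSubgroup.comap_map_eq_self (by simp),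
    AddSubgroup.comap_map_eq_self (by simp), AddSubgroup.map_eq_bot_iff,
    ker_mk']

theorem image_mk'_add_map_ne_of_ne {S : Set G} {H L : AddSubgroup G} (hIH : I ≤ H) (hIL : I ≤ L)
    (hne : S + (H : Set G) ≠ S + H + L) :
    mk' I '' S + (H.map (mk' I) : Set (G ⧸ I)) ≠
      mk' I '' S + (H.map (mk' I) : Set (G ⧸ I)) + L.map (mk' I) := by
  intro heq
  apply hne
  rw [AddSubgroup.coe_map, AddSubgroup.coe_map, ← Set.image_add, ← Set.image_add, coe_mk'] at heq
  simpa only [preimage_image_mk_eq_add, add_assoc, AddSubgroup.coe_add_coe_of_le hIH,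
    AddSubgroup.coe_add_coe_of_le hIL] using congrArg (mk ⁻¹' ·) heq

end

/-- Lemma 2 (first part): if `S` is a finite subset and `H, L` finite subgroups of an
abelian group `G` with `|L| ≤ |H|`, `S + H ≠ S + H + L`, and
`max{|S+H|−|H|, |S+L|−|L|} ≤ |S+I|−|I|` for `I := H ∩ L`, then all three quantities
are equal. -/
theorem geom_lemma_card {G : Type*} [AddCommGroup G]
    (S : Set G) (hS : S.Finite) (H L : AddSubgroup G)
    (hHfin : (H : Set G).Finite) (hLfin : (L : Set G).Finite)
    (hcard : ((L : Set G)).ncard ≤ ((H : Set G)).ncard)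
    (hne : S + (H : Set G) ≠ S + (H : Set G) + (L : Set G)) :
    let I : AddSubgroup G := H ⊓ L
    max (((S + (H : Set G)).ncard : ℤ) - ((H : Set G)).ncard)
        (((S + (L : Set G)).ncard : ℤ) - ((L : Set G)).ncard)
      ≤ ((S + (I : Set G)).ncard : ℤ) - ((I : Set G)).ncard →
    (((S + (H : Set G)).ncard : ℤ) - ((H : Set G)).ncard
        = ((S + (I : Set G)).ncard : ℤ) - ((I : Set G)).ncard
      ∧ ((S + (L : Set G)).ncard : ℤ) - ((L : Set G)).ncard
        = ((S + (I : Set G)).ncard : ℤ) - ((I : Set G)).ncard) := by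
  intro I hmax
  have hIH : I ≤ H := inf_le_left
  have hIL : I ≤ L := inf_le_right
  have hI : 0 < (I : Set G).ncard := (Set.ncard_pos (hHfin.subset hIH)).2 ⟨0, I.zero_mem⟩
  have hSI : ((S + (I : Set G)).ncard : ℤ) - (I : Set G).ncard =
      (I : Set G).ncard * (((QuotientAddGroup.mk' I '' S).ncard : ℤ) - 1) := by
    rw [AddSubgroup.ncard_add_eq_mul_ncard_image_mk, QuotientAddGroup.coe_mk']
    push_cast
    ring
  rw [AddSubgroup.ncard_add_sub_ncard_eq_mul S hIH, AddSubgroup.ncard_add_sub_ncard_eq_mul S hIL,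
    hSI] at hmax ⊢
  have hI' : (0 : ℤ) < (I : Set G).ncard := by exact_mod_cast hI
  rw [← mul_max_of_nonneg _ _ hI'.le] at hmax
  obtain ⟨h₁, h₂⟩ := max_le_iff.1 (le_of_mul_le_mul_left hmax hI')
  rw [AddSubgroup.ncard_eq_mul_ncard_map_mk' hIH, AddSubgroup.ncard_eq_mul_ncard_map_mk' hIL]
    at hcard
  obtain ⟨eH, eL⟩ := ncard_add_sub_ncard_eq_of_inf_eq_bot (hS.image _) (hHfin.image _)
    (hLfin.image _) (AddSubgroup.map_mk'_inf_map_mk'_eq_bot H L)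
    (Nat.le_of_mul_le_mul_left hcard hI) (image_mk'_add_map_ne_of_ne hIH hIL hne) h₁ h₂
  rw [eH, eL]
  exact ⟨rfl, rfl⟩
end

section
/- Let S be a finite subset and H, L finite subgroups of an abelian group G with |L| ≤ |H|, S + H ≠ S + H + L, and max{|S+H|−|H|, |S+L|−|L|} ≤ |S+I|−|I| where I := H ∩ L. Then there exists g ∈ G such that (S+I) ∖ (g+H+L) is a (possibly empty) union of (H+L)-cosets, and either (i) (S+I) ∩ (g+H+L) = g+I, or (ii) (S+I) ∩ (g+H+L) = (g+H+L) ∖ (g+(H ∪ L)) and |H| = |L|. -/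
/-!
Write `T = S + I` and `K = H + L`. The hypothesis says that the defects `|T + M| - |T|` for
`M = H, L` are at most `|M| - |I|`. Defects are nonnegative and additive over the `K`-cosets,
and since `S + H ≠ S + H + L` some `K`-coset `Q` meets `T` in a set `X` with `X + H ≠ Q`.
Inside `Q` every `H`-coset meets every `L`-coset in an `I`-coset, so
`|(X + H) ∩ (X + L)| |H| |L| = |X + H| |X + L| |I|`; together with the divisibilities by `|I|`,
`|H|`, `|L|` this forces the defects of `X` to be exactly `|H| - |I|` and `|L| - |I|`, and
leaves two shapes: `X` is an `I`-coset, or `|H| = |L|` and `X + H`, `X + L` each miss exactly one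
coset of `Q`, so that `X` is `Q` minus a cross `g + (H ∪ L)`. Then `X` uses up all the defect,
so `T \ Q` has none: it is `H`- and `L`-periodic, i.e. a union of `K`-cosets.
-/

open Pointwise

namespace CosetStructure

section AddGroup

variable {G : Type*} [AddGroup G]

lemma singleton_add_eq_vadd (g : G) (A : Set G) : ({g} : Set G) + A = g +ᵥ A := by
  rw [Set.singleton_add]; rfl

lemma mem_singleton_add_iff {g x : G} {A : Set G} : x ∈ ({g} : Set G) + A ↔ -g + x ∈ A := by
  rw [singleton_add_eq_vadd, mem_leftAddCoset_iff]

lemma ncard_singleton_add (g : G) (A : Set G) : (({g} : Set G) + A).ncard = A.ncard := by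
  rw [singleton_add_eq_vadd, Set.ncard_vadd_set]

lemma singleton_add_inter (g : G) (A B : Set G) :
    ({g} : Set G) + (A ∩ B) = ({g} + A) ∩ ({g} + B) := by
  simp only [singleton_add_eq_vadd, Set.vadd_set_inter]

variable {H K : AddSubgroup G}

lemma mem_singleton_add_self (g : G) (K : AddSubgroup G) : g ∈ ({g} : Set G) + (K : Set G) :=
  mem_singleton_add_iff.2 (by simp)

lemma singleton_add_eq_of_mem {g x : G} (h : x ∈ ({g} : Set G) + K) :
    ({x} : Set G) + K = ({g} : Set G) + K := by
  rw [singleton_add_eq_vadd, singleton_add_eq_vadd, leftAddCoset_eq_iff]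
  simpa using K.neg_mem (mem_singleton_add_iff.1 h)

lemma coe_add_coe_of_le (h : H ≤ K) : (K : Set G) + H = K := by
  refine subset_antisymm ?_ fun x hx => ⟨x, hx, 0, H.zero_mem, add_zero x⟩
  rintro _ ⟨a, ha, b, hb, rfl⟩
  exact K.add_mem ha (h hb)

lemma add_coe_add_coe_of_le (A : Set G) (h : H ≤ K) : A + K + H = A + K := by
  rw [add_assoc, coe_add_coe_of_le h]

lemma subset_add_coe (A : Set G) (H : AddSubgroup G) : A ⊆ A + H :=
  fun a ha => ⟨a, ha, 0, H.zero_mem, add_zero a⟩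

lemma singleton_add_subset {P : Set G} (hP : P + H ⊆ P) {c : G} (hc : c ∈ P) :
    ({c} : Set G) + H ⊆ P :=
  (Set.add_subset_add_right (Set.singleton_subset_iff.2 hc)).trans hP

lemma mem_of_add_mem {P : Set G} (hP : P + H ⊆ P) {x y : G} (hy : y ∈ H) (hxy : x + y ∈ P) :
    x ∈ P := by
  simpa using hP ⟨x + y, hxy, -y, H.neg_mem hy, rfl⟩

lemma sdiff_add_subset {P R : Set G} (hP : P + H ⊆ P) (hR : R + H ⊆ R) :
    P \ R + H ⊆ P \ R := by
  rintro _ ⟨x, hx, y, hy, rfl⟩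
  exact ⟨hP ⟨x, hx.1, y, hy, rfl⟩, fun h => hx.2 (mem_of_add_mem hR hy h)⟩

lemma disjoint_add_of_disjoint {P R : Set G} (hR : R + H ⊆ R) (h : Disjoint P R) :
    Disjoint (P + H) R := by
  rw [Set.disjoint_left]
  rintro _ ⟨x, hx, y, hy, rfl⟩ hxy
  exact Set.disjoint_left.1 h hx (mem_of_add_mem hR hy hxy)

lemma eq_biUnion_singleton_add {P : Set G} (hP : P + K ⊆ P) :
    P = ⋃ c ∈ P, ({c} : Set G) + (K : Set G) :=
  subset_antisymm (fun c hc => Set.mem_biUnion (x := c) hc (mem_singleton_add_self c K))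
    (Set.iUnion₂_subset fun _ => singleton_add_subset hP)

lemma singleton_add_eq_of_ncard_le {P : Set G} (hP : P + H ⊆ P) (hPfin : P.Finite) {c : G}
    (hc : c ∈ P) (hcard : P.ncard ≤ (H : Set G).ncard) : ({c} : Set G) + H = P :=
  Set.eq_of_subset_of_ncard_le (singleton_add_subset hP hc) (by rwa [ncard_singleton_add]) hPfin

lemma ncard_union_singleton_add {P : Set G} (hP : P + H ⊆ P) (hPfin : P.Finite)
    (hHfin : (H : Set G).Finite) {c : G} (hc : c ∉ P) :
    (P ∪ (({c} : Set G) + H)).ncard = P.ncard + (H : Set G).ncard := by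
  have hdisj : Disjoint P (({c} : Set G) + H) :=
    (disjoint_add_of_disjoint hP (Set.disjoint_singleton_left.2 hc)).symm
  rw [Set.ncard_union_eq hdisj hPfin ((Set.finite_singleton c).add hHfin), ncard_singleton_add]

theorem induction_on_add_subset {motive : Set G → Prop} (empty : motive ∅)
    (union : ∀ P c, P.Finite → P + H ⊆ P → c ∉ P → motive P →
      motive (P ∪ (({c} : Set G) + H)))
    {P : Set G} (hPfin : P.Finite) (hP : P + H ⊆ P) : motive P := by
  induction hn : P.ncard using Nat.strong_induction_on generalizing P with
  | _ n ih =>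
    obtain rfl | ⟨c, hc⟩ := P.eq_empty_or_nonempty
    · exact empty
    have hsub := singleton_add_subset hP hc
    have hP' := sdiff_add_subset hP (add_coe_add_coe_of_le {c} le_rfl).subset
    have hlt : (P \ (({c} : Set G) + H)).ncard < n :=
      hn ▸ Set.ncard_lt_ncard
        (Set.sdiff_ssubset_left_iff.2 ⟨c, hc, mem_singleton_add_self c H⟩) hPfin
    have key := union _ c hPfin.sdiff hP' (fun h => h.2 (mem_singleton_add_self c H))
      (ih _ hlt hPfin.sdiff hP' rfl)
    rwa [Set.sdiff_union_of_subset hsub] at key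

lemma ncard_dvd_ncard_of_add_subset (hHfin : (H : Set G).Finite) {P : Set G} (hPfin : P.Finite)
    (hP : P + H ⊆ P) : (H : Set G).ncard ∣ P.ncard := by
  refine induction_on_add_subset (motive := fun P => (H : Set G).ncard ∣ P.ncard) (by simp)
    (fun P c hPfin hP hc ih => ?_) hPfin hP
  rw [ncard_union_singleton_add hP hPfin hHfin hc]
  exact dvd_add ih dvd_rfl

lemma ncard_add_eq_inter_add_sdiff {U : Set G} (hU : U + H ⊆ U) {T : Set G} (hTfin : T.Finite)
    (hHfin : (H : Set G).Finite) : (T + H).ncard = (T ∩ U + H).ncard + (T \ U + H).ncard := by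
  have hdisj : Disjoint (T ∩ U + H) (T \ U + H) :=
    (disjoint_add_of_disjoint hU Set.disjoint_sdiff_left).symm.mono_left
      ((Set.add_subset_add_right Set.inter_subset_right).trans hU)
  rw [← Set.ncard_union_eq hdisj ((hTfin.inter_of_left U).add hHfin) (hTfin.sdiff.add hHfin),
    ← Set.union_add, Set.inter_union_sdiff]

lemma ncard_inter_add_add_le {U : Set G} (hU : U + H ⊆ U) {T : Set G} (hTfin : T.Finite)
    (hHfin : (H : Set G).Finite) {r : ℕ}
    (hT : (T + H).ncard + r ≤ T.ncard + (H : Set G).ncard) :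
    (T ∩ U + H).ncard + r ≤ (T ∩ U).ncard + (H : Set G).ncard := by
  have := ncard_add_eq_inter_add_sdiff hU hTfin hHfin
  have := Set.ncard_inter_add_ncard_sdiff_eq_ncard T U hTfin
  have := Set.ncard_le_ncard (subset_add_coe (T \ U) H) (hTfin.sdiff.add hHfin)
  omega

lemma sdiff_add_subset_of_ncard_eq {U : Set G} (hU : U + H ⊆ U) {T : Set G} (hTfin : T.Finite)
    (hHfin : (H : Set G).Finite) {r : ℕ} (hT : (T + H).ncard + r ≤ T.ncard + (H : Set G).ncard)
    (hTU : (T ∩ U + H).ncard + r = (T ∩ U).ncard + (H : Set G).ncard) :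
    T \ U + H ⊆ T \ U := by
  have := ncard_add_eq_inter_add_sdiff hU hTfin hHfin
  have := Set.ncard_inter_add_ncard_sdiff_eq_ncard T U hTfin
  exact (Set.eq_of_subset_of_ncard_le (subset_add_coe (T \ U) H) (by omega)
    (hTfin.sdiff.add hHfin)).ge

lemma exists_inter_singleton_add_add_ne {T : Set G} (hHK : H ≤ K) (hT : T + H ≠ T + K) :
    ∃ t ∈ T, T ∩ (({t} : Set G) + K) + H ≠ ({t} : Set G) + K := by
  obtain ⟨z, ⟨t, ht, k, hk, rfl⟩, hz⟩ := Set.not_subset.1 fun h =>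
    hT (subset_antisymm (Set.add_subset_add_left fun x hx => hHK hx) h)
  refine ⟨t, ht, fun h => hz ?_⟩
  have : t + k ∈ ({t} : Set G) + K := Set.add_mem_add rfl hk
  rw [← h] at this
  exact Set.add_subset_add_right Set.inter_subset_left this

lemma exists_singleton_add_eq_sdiff (hHK : H ≤ K) (hHfin : (H : Set G).Finite)
    (hKfin : (K : Set G).Finite) {t : G} {P : Set G} (hP : P + H ⊆ P)
    (hPQ : P ⊆ ({t} : Set G) + K) (hcard : P.ncard + (H : Set G).ncard = (K : Set G).ncard) :
    ∃ c ∈ ({t} : Set G) + K, ({c} : Set G) + H = (({t} : Set G) + K) \ P := by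
  have hQfin : (({t} : Set G) + K).Finite := (Set.finite_singleton t).add hKfin
  have hD := Set.ncard_sdiff_add_ncard_of_subset hPQ hQfin
  rw [ncard_singleton_add] at hD
  obtain ⟨c, hc⟩ := Set.nonempty_of_ncard_ne_zero (s := (({t} : Set G) + (K : Set G)) \ P)
    (by have := (Set.ncard_pos hHfin).2 ⟨0, H.zero_mem⟩; omega)
  exact ⟨c, hc.1, singleton_add_eq_of_ncard_le
    (sdiff_add_subset (add_coe_add_coe_of_le {t} hHK).subset hP) hQfin.sdiff hc (by omega)⟩

end AddGroup

/-- The counts of `budget_cases` in units of `|I|`: `|H| = h`, `|L| = l`, `|X| = x`,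
`|X + H| = h b`, `|X + L| = l a`, and `|H + L| = h l`. -/
lemma budget_cases_normalized {h l a b x : ℕ} (hlh : l ≤ h) (hbl : b < l) (hx : 0 < x)
    (hxab : x ≤ a * b) (hH : h * b + 1 ≤ x + h) (hL : l * a + 1 ≤ x + l) :
    (h * b + 1 = x + h ∧ l * a + 1 = x + l) ∧
      (x = 1 ∨ h = l ∧ a + 1 = l ∧ b + 1 = l ∧ x = a * b) := by
  have hab : a ≤ b := by
    by_contra! hba
    obtain ⟨u, rfl⟩ := Nat.exists_eq_add_of_lt hba
    obtain ⟨v, rfl⟩ := Nat.exists_eq_add_of_lt hbl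
    nlinarith
  rcases Nat.lt_or_ge b 2 with hb | hb
  · obtain rfl : b = 1 := by
      rcases Nat.eq_zero_or_pos b with rfl | hb0
      · simp at hxab; omega
      · omega
    obtain rfl : a = 1 := by nlinarith
    omega
  · have hbb : a * b ≤ b * b := Nat.mul_le_mul_right b hab
    have hhb : h ≤ b + 1 := by nlinarith
    obtain rfl : h = b + 1 := by omega
    obtain rfl : l = b + 1 := by omega
    obtain rfl : a = b := by nlinarith
    exact ⟨⟨by nlinarith, by nlinarith⟩, Or.inr ⟨rfl, rfl, rfl, by nlinarith⟩⟩

/-- `i, n, m, k, x, p, q` stand for `|I|, |H|, |L|, |H + L|, |X|, |X + H|, |X + L|`. -/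
lemma budget_cases {i n m k x p q : ℕ} (hi : 0 < i) (hn : i ∣ n) (hm : i ∣ m) (hx : i ∣ x)
    (hp : n ∣ p) (hq : m ∣ q) (hk : k * i = n * m) (hmn : m ≤ n) (hx0 : 0 < x) (hpk : p < k)
    (hgrid : x * n * m ≤ p * q * i) (hH : p + i ≤ x + n) (hL : q + i ≤ x + m) :
    (p + i = x + n ∧ q + i = x + m) ∧
      (x = i ∨ n = m ∧ p + n = k ∧ q + m = k ∧ x * n * m = p * q * i) := by
  obtain ⟨h, rfl⟩ := hn
  obtain ⟨l, rfl⟩ := hm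
  obtain ⟨x, rfl⟩ := hx
  obtain ⟨b, rfl⟩ := hp
  obtain ⟨a, rfl⟩ := hq
  obtain rfl : k = i * h * l := Nat.eq_of_mul_eq_mul_right hi (by rw [hk]; ring)
  have hbl : b < l := Nat.lt_of_mul_lt_mul_left hpk
  have hpos : 0 < i * i * i * h * l := by
    have : 0 < l := by omega
    have : 0 < h := by nlinarith
    positivity
  obtain ⟨⟨eH, eL⟩, hcases⟩ := budget_cases_normalized (Nat.le_of_mul_le_mul_left hmn hi)
    hbl (Nat.pos_of_mul_pos_left hx0)
    (show x ≤ a * b from Nat.le_of_mul_le_mul_left (by convert hgrid using 1 <;> ring) hpos)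
    (show h * b + 1 ≤ x + h from Nat.le_of_mul_le_mul_left (by convert hH using 1 <;> ring) hi)
    (show l * a + 1 ≤ x + l from Nat.le_of_mul_le_mul_left (by convert hL using 1 <;> ring) hi)
  refine ⟨⟨?_, ?_⟩, ?_⟩
  · calc i * h * b + i = i * (h * b + 1) := by ring
      _ = i * x + i * h := by rw [eH]; ring
  · calc i * l * a + i = i * (l * a + 1) := by ring
      _ = i * x + i * l := by rw [eL]; ring
  · rcases hcases with rfl | ⟨rfl, ha, hb, rfl⟩
    · simp
    · refine Or.inr ⟨rfl, ?_, ?_, by ring⟩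
      · rw [← hb]; ring
      · rw [← ha]; ring

section AddCommGroup

variable {G : Type*} [AddCommGroup G] {H L : AddSubgroup G}

lemma exists_singleton_add_inter_eq {g c d : G} (hc : c ∈ ({g} : Set G) + ↑(H ⊔ L))
    (hd : d ∈ ({g} : Set G) + ↑(H ⊔ L)) :
    ∃ e, (({c} : Set G) + H) ∩ (({d} : Set G) + L) = ({e} : Set G) + ↑(H ⊓ L) := by
  have hcd : -c + d ∈ (H : Set G) + L := by
    have := AddSubgroup.sub_mem _ (mem_singleton_add_iff.1 hd) (mem_singleton_add_iff.1 hc)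
    rw [← AddSubgroup.normal_add, show -c + d = -g + d - (-g + c) by abel]
    exact this
  obtain ⟨h, hh, l, hl, hhl⟩ := hcd
  have hd : d = c + h + l := by
    calc d = c + (-c + d) := by abel
      _ = c + h + l := by rw [← hhl, add_assoc]
  have heH : c + h ∈ ({c} : Set G) + H := mem_singleton_add_iff.2 (by simpa using hh)
  have heL : c + h ∈ ({d} : Set G) + L := by
    rw [mem_singleton_add_iff, hd, show -(c + h + l) + (c + h) = -l by abel]
    exact L.neg_mem hl
  refine ⟨c + h, ?_⟩
  rw [← singleton_add_eq_of_mem heH, ← singleton_add_eq_of_mem heL, AddSubgroup.coe_inf,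
    singleton_add_inter]

lemma add_coe_add_coe_of_le' (A : Set G) {M N : AddSubgroup G} (h : M ≤ N) :
    A + M + N = A + N := by
  rw [add_assoc, add_comm (M : Set G), coe_add_coe_of_le h]

variable (hHfin : (H : Set G).Finite) (hLfin : (L : Set G).Finite)
include hHfin hLfin

lemma finite_coe_sup : (↑(H ⊔ L) : Set G).Finite := by
  rw [AddSubgroup.normal_add]; exact hHfin.add hLfin

lemma ncard_singleton_add_inter_mul {g c : G} (hc : c ∈ ({g} : Set G) + ↑(H ⊔ L)) {R : Set G}
    (hRfin : R.Finite) (hR : R + L ⊆ R) (hRQ : R ⊆ ({g} : Set G) + ↑(H ⊔ L)) :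
    ((({c} : Set G) + H) ∩ R).ncard * (L : Set G).ncard
      = R.ncard * (↑(H ⊓ L) : Set G).ncard := by
  refine induction_on_add_subset (motive := fun R =>
      R ⊆ ({g} : Set G) + (↑(H ⊔ L) : Set G) →
        ((({c} : Set G) + H) ∩ R).ncard * (L : Set G).ncard
          = R.ncard * (↑(H ⊓ L) : Set G).ncard)
    (by simp) (fun R d hRfin hR hd ih hRQ => ?_) hRfin hR hRQ
  obtain ⟨e, he⟩ := exists_singleton_add_inter_eq hc
    (hRQ (Set.mem_union_right _ (mem_singleton_add_self d L)))
  have hdisj : Disjoint ((({c} : Set G) + H) ∩ R) ((({c} : Set G) + H) ∩ (({d} : Set G) + L)) :=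
    (disjoint_add_of_disjoint hR (Set.disjoint_singleton_left.2 hd)).symm.mono
      Set.inter_subset_right Set.inter_subset_right
  have hfin (A : Set G) : ((({c} : Set G) + H) ∩ A).Finite :=
    ((Set.finite_singleton c).add hHfin).inter_of_left A
  rw [Set.inter_union_distrib_left, Set.ncard_union_eq hdisj (hfin _) (hfin _), he,
    ncard_singleton_add, ncard_union_singleton_add hR hRfin hLfin hd, add_mul, add_mul,
    ih (Set.subset_union_left.trans hRQ), mul_comm (L : Set G).ncard]

lemma ncard_inter_mul_mul {g : G} {P R : Set G} (hPfin : P.Finite) (hRfin : R.Finite)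
    (hP : P + H ⊆ P) (hR : R + L ⊆ R) (hPQ : P ⊆ ({g} : Set G) + ↑(H ⊔ L))
    (hRQ : R ⊆ ({g} : Set G) + ↑(H ⊔ L)) :
    (P ∩ R).ncard * (H : Set G).ncard * (L : Set G).ncard
      = P.ncard * R.ncard * (↑(H ⊓ L) : Set G).ncard := by
  refine induction_on_add_subset (motive := fun P =>
      P ⊆ ({g} : Set G) + (↑(H ⊔ L) : Set G) →
        (P ∩ R).ncard * (H : Set G).ncard * (L : Set G).ncard
          = P.ncard * R.ncard * (↑(H ⊓ L) : Set G).ncard)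
    (by simp) (fun P c hPfin hP hc ih hPQ => ?_) hPfin hP hPQ
  have hdisj : Disjoint (P ∩ R) ((({c} : Set G) + H) ∩ R) :=
    (disjoint_add_of_disjoint hP (Set.disjoint_singleton_left.2 hc)).symm.mono
      Set.inter_subset_left Set.inter_subset_left
  rw [Set.union_inter_distrib_right, Set.ncard_union_eq hdisj (hPfin.inter_of_left R)
    (hRfin.inter_of_right _), ncard_union_singleton_add hP hPfin hHfin hc, add_mul, add_mul,
    add_mul, ih (Set.subset_union_left.trans hPQ), mul_right_comm _ (H : Set G).ncard,
    ncard_singleton_add_inter_mul hHfin hLfin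
      (hPQ (Set.mem_union_right _ (mem_singleton_add_self c H))) hRfin hR hRQ]
  ring

lemma ncard_sup_mul_ncard_inf :
    (↑(H ⊔ L) : Set G).ncard * (↑(H ⊓ L) : Set G).ncard
      = (H : Set G).ncard * (L : Set G).ncard := by
  have hK := finite_coe_sup hHfin hLfin
  have hKQ : (↑(H ⊔ L) : Set G) ⊆ ({0} : Set G) + ↑(H ⊔ L) := by simp
  have key := ncard_inter_mul_mul hHfin hLfin hK hK (coe_add_coe_of_le le_sup_left).subset
    (coe_add_coe_of_le le_sup_right).subset hKQ hKQ
  rw [Set.inter_self, mul_assoc, mul_assoc] at key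
  exact (Nat.eq_of_mul_eq_mul_left ((Set.ncard_pos hK).2 ⟨0, zero_mem _⟩) key).symm

lemma exists_eq_sdiff_singleton_add_union {t : G} {X : Set G} (hXfin : X.Finite)
    (hXQ : X ⊆ ({t} : Set G) + ↑(H ⊔ L)) (hgrid : ((X + H) ∩ (X + L)).ncard ≤ X.ncard)
    (hH : (X + H).ncard + (H : Set G).ncard = (↑(H ⊔ L) : Set G).ncard)
    (hL : (X + L).ncard + (L : Set G).ncard = (↑(H ⊔ L) : Set G).ncard) :
    ∃ e, ({e} : Set G) + ↑(H ⊔ L) = ({t} : Set G) + ↑(H ⊔ L) ∧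
      X = (({e} : Set G) + ↑(H ⊔ L)) \ ({e} + ((H : Set G) ∪ L)) := by
  have hKfin := finite_coe_sup hHfin hLfin
  have hXHQ : X + H ⊆ ({t} : Set G) + ↑(H ⊔ L) :=
    (Set.add_subset_add_right hXQ).trans (add_coe_add_coe_of_le {t} le_sup_left).subset
  have hXLQ : X + L ⊆ ({t} : Set G) + ↑(H ⊔ L) :=
    (Set.add_subset_add_right hXQ).trans (add_coe_add_coe_of_le {t} le_sup_right).subset
  obtain ⟨c, hcQ, hc⟩ := exists_singleton_add_eq_sdiff le_sup_left hHfin hKfin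
    (add_coe_add_coe_of_le X le_rfl).subset hXHQ hH
  obtain ⟨d, hdQ, hd⟩ := exists_singleton_add_eq_sdiff le_sup_right hLfin hKfin
    (add_coe_add_coe_of_le X le_rfl).subset hXLQ hL
  obtain ⟨e, he⟩ := exists_singleton_add_inter_eq hcQ hdQ
  have heI := he ▸ mem_singleton_add_self e (H ⊓ L)
  have heQ : ({e} : Set G) + ↑(H ⊔ L) = ({t} : Set G) + ↑(H ⊔ L) :=
    singleton_add_eq_of_mem (hc.subset heI.1).1
  have hX : X = (X + H) ∩ (X + L) :=
    Set.eq_of_subset_of_ncard_le (Set.subset_inter (subset_add_coe X H) (subset_add_coe X L))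
      hgrid ((hXfin.add hHfin).inter_of_left _)
  refine ⟨e, heQ, ?_⟩
  rw [heQ, Set.add_union, singleton_add_eq_of_mem heI.1, singleton_add_eq_of_mem heI.2, hc, hd,
    ← Set.sdiff_inter_sdiff, Set.sdiff_sdiff_cancel_left hXHQ, Set.sdiff_sdiff_cancel_left hXLQ]
  exact hX

theorem budget_eq_and_structure (hcard : (L : Set G).ncard ≤ (H : Set G).ncard) {t : G}
    {X : Set G} (hXfin : X.Finite) (ht : t ∈ X) (hXI : X + ↑(H ⊓ L) ⊆ X)
    (hXQ : X ⊆ ({t} : Set G) + ↑(H ⊔ L))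
    (hXH : X + H ≠ ({t} : Set G) + ↑(H ⊔ L))
    (hbudH : (X + H).ncard + (↑(H ⊓ L) : Set G).ncard ≤ X.ncard + (H : Set G).ncard)
    (hbudL : (X + L).ncard + (↑(H ⊓ L) : Set G).ncard ≤ X.ncard + (L : Set G).ncard) :
    ((X + H).ncard + (↑(H ⊓ L) : Set G).ncard = X.ncard + (H : Set G).ncard ∧
      (X + L).ncard + (↑(H ⊓ L) : Set G).ncard = X.ncard + (L : Set G).ncard) ∧
    ∃ g, ({g} : Set G) + ↑(H ⊔ L) = ({t} : Set G) + ↑(H ⊔ L) ∧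
      (X = ({g} : Set G) + ↑(H ⊓ L) ∨
        X = (({g} : Set G) + ↑(H ⊔ L)) \ ({g} + ((H : Set G) ∪ L)) ∧
          (H : Set G).ncard = (L : Set G).ncard) := by
  have hIfin : (↑(H ⊓ L) : Set G).Finite := hHfin.subset (SetLike.coe_subset_coe.2 inf_le_left)
  have hXHQ : X + H ⊆ ({t} : Set G) + ↑(H ⊔ L) :=
    (Set.add_subset_add_right hXQ).trans (add_coe_add_coe_of_le {t} le_sup_left).subset
  have hXLQ : X + L ⊆ ({t} : Set G) + ↑(H ⊔ L) :=
    (Set.add_subset_add_right hXQ).trans (add_coe_add_coe_of_le {t} le_sup_right).subset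
  have hgrid := ncard_inter_mul_mul hHfin hLfin (hXfin.add hHfin) (hXfin.add hLfin)
    (add_coe_add_coe_of_le X le_rfl).subset (add_coe_add_coe_of_le X le_rfl).subset hXHQ hXLQ
  have hXgrid : X.ncard ≤ ((X + H) ∩ (X + L)).ncard :=
    Set.ncard_le_ncard (Set.subset_inter (subset_add_coe X H) (subset_add_coe X L))
      ((hXfin.add hHfin).inter_of_left _)
  have hXHK : (X + H).ncard < (↑(H ⊔ L) : Set G).ncard := by
    rw [← ncard_singleton_add t (↑(H ⊔ L) : Set G)]
    exact Set.ncard_lt_ncard (hXHQ.ssubset_of_ne hXH)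
      ((Set.finite_singleton t).add (finite_coe_sup hHfin hLfin))
  have hpos (M : AddSubgroup G) (hM : (M : Set G).Finite) : 0 < (M : Set G).ncard :=
    (Set.ncard_pos hM).2 ⟨0, M.zero_mem⟩
  obtain ⟨hbud, hcases⟩ := budget_cases (hpos _ hIfin)
    (ncard_dvd_ncard_of_add_subset hIfin hHfin (coe_add_coe_of_le inf_le_left).subset)
    (ncard_dvd_ncard_of_add_subset hIfin hLfin (coe_add_coe_of_le inf_le_right).subset)
    (ncard_dvd_ncard_of_add_subset hIfin hXfin hXI)
    (ncard_dvd_ncard_of_add_subset hHfin (hXfin.add hHfin) (add_coe_add_coe_of_le X le_rfl).subset)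
    (ncard_dvd_ncard_of_add_subset hLfin (hXfin.add hLfin) (add_coe_add_coe_of_le X le_rfl).subset)
    (ncard_sup_mul_ncard_inf hHfin hLfin) hcard ((Set.ncard_pos hXfin).2 ⟨t, ht⟩) hXHK
    (hgrid ▸ Nat.mul_le_mul_right _ (Nat.mul_le_mul_right _ hXgrid)) hbudH hbudL
  refine ⟨hbud, ?_⟩
  rcases hcases with hx | ⟨hHL, hH, hL, hx⟩
  · exact ⟨t, rfl, Or.inl (singleton_add_eq_of_ncard_le hXI hXfin ht hx.le).symm⟩
  have hXgrid' : ((X + H) ∩ (X + L)).ncard ≤ X.ncard := by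
    refine le_of_mul_le_mul_right (a := (H : Set G).ncard * (L : Set G).ncard) ?_
      (Nat.mul_pos (hpos H hHfin) (hpos L hLfin))
    rw [← mul_assoc, ← mul_assoc, hgrid, hx]
  obtain ⟨g, hgQ, hX⟩ := exists_eq_sdiff_singleton_add_union hHfin hLfin hXfin hXQ hXgrid' hH hL
  exact ⟨g, hgQ, Or.inr ⟨hX, hHL⟩⟩

end AddCommGroup

end CosetStructure

open CosetStructure in
/-- Lemma 2 (second part): under the same hypotheses, there exists `g ∈ G` such that
`(S+I) ∖ (g+H+L)` is a (possibly empty) union of `(H+L)`-cosets and either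
(i) `(S+I) ∩ (g+H+L) = g+I`, or
(ii) `(S+I) ∩ (g+H+L) = (g+H+L) ∖ (g+(H ∪ L))` and `|H| = |L|`. -/
theorem geom_lemma_structure {G : Type*} [AddCommGroup G]
    (S : Set G) (hS : S.Finite) (H L : AddSubgroup G)
    (hHfin : (H : Set G).Finite) (hLfin : (L : Set G).Finite)
    (hcard : ((L : Set G)).ncard ≤ ((H : Set G)).ncard)
    (hne : S + (H : Set G) ≠ S + (H : Set G) + (L : Set G))
    (hmax : max (((S + (H : Set G)).ncard : ℤ) - ((H : Set G)).ncard)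
        (((S + (L : Set G)).ncard : ℤ) - ((L : Set G)).ncard)
      ≤ ((S + ((H ⊓ L : AddSubgroup G) : Set G)).ncard : ℤ)
          - (((H ⊓ L : AddSubgroup G) : Set G)).ncard) :
    ∃ g : G,
      (∃ C : Set G,
        (S + ((H ⊓ L : AddSubgroup G) : Set G)) \ ({g} + ((H : Set G) + (L : Set G)))
          = ⋃ c ∈ C, ({c} + ((H : Set G) + (L : Set G)))) ∧
      (((S + ((H ⊓ L : AddSubgroup G) : Set G)) ∩ ({g} + ((H : Set G) + (L : Set G)))
          = {g} + ((H ⊓ L : AddSubgroup G) : Set G))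
        ∨ ((S + ((H ⊓ L : AddSubgroup G) : Set G)) ∩ ({g} + ((H : Set G) + (L : Set G)))
            = ({g} + ((H : Set G) + (L : Set G))) \ ({g} + ((H : Set G) ∪ (L : Set G)))
          ∧ ((H : Set G)).ncard = ((L : Set G)).ncard)) := by
  rw [← AddSubgroup.normal_add]
  set T := S + ↑(H ⊓ L)
  have hTfin : T.Finite := hS.add (hHfin.subset (SetLike.coe_subset_coe.2 inf_le_left))
  have hTH : T + H = S + H := add_coe_add_coe_of_le' S inf_le_left
  have hTL : T + L = S + L := add_coe_add_coe_of_le' S inf_le_right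
  have hTK : T + ↑(H ⊔ L) = S + H + L := by
    rw [add_coe_add_coe_of_le' S (inf_le_left.trans le_sup_left), AddSubgroup.normal_add,
      add_assoc]
  have hbudH : (T + H).ncard + (↑(H ⊓ L) : Set G).ncard ≤ T.ncard + (H : Set G).ncard := by
    have := (max_le_iff.1 hmax).1; rw [hTH]; omega
  have hbudL : (T + L).ncard + (↑(H ⊓ L) : Set G).ncard ≤ T.ncard + (L : Set G).ncard := by
    have := (max_le_iff.1 hmax).2; rw [hTL]; omega
  obtain ⟨t, ht, hXH⟩ := exists_inter_singleton_add_add_ne le_sup_left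
    (by rw [hTH, hTK]; exact hne : T + H ≠ T + ↑(H ⊔ L))
  set Q := ({t} : Set G) + ↑(H ⊔ L)
  have hQ (M : AddSubgroup G) (hM : M ≤ H ⊔ L) : Q + M ⊆ Q :=
    (add_coe_add_coe_of_le {t} hM).subset
  obtain ⟨⟨hH, hL⟩, g, hgQ, hshape⟩ := budget_eq_and_structure hHfin hLfin hcard
    (hTfin.inter_of_left Q) ⟨ht, mem_singleton_add_self t _⟩
    (Set.inter_add_subset.trans (Set.inter_subset_inter (add_coe_add_coe_of_le S le_rfl).subset
      (hQ _ (inf_le_left.trans le_sup_left))))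
    Set.inter_subset_right hXH (ncard_inter_add_add_le (hQ H le_sup_left) hTfin hHfin hbudH)
    (ncard_inter_add_add_le (hQ L le_sup_right) hTfin hLfin hbudL)
  have hrest : T \ Q + ↑(H ⊔ L) ⊆ T \ Q := by
    rw [AddSubgroup.normal_add, ← add_assoc]
    exact (Set.add_subset_add_right
      (sdiff_add_subset_of_ncard_eq (hQ H le_sup_left) hTfin hHfin hbudH hH)).trans
      (sdiff_add_subset_of_ncard_eq (hQ L le_sup_right) hTfin hLfin hbudL hL)
  rw [show Q = ({g} : Set G) + ↑(H ⊔ L) from hgQ.symm] at hshape hrest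
  exact ⟨g, ⟨T \ ({g} + ↑(H ⊔ L)), eq_biUnion_singleton_add hrest⟩, hshape⟩
end

section
/- Let G be a finite abelian group, S ⊂ G a proper subset, and suppose subgroups L ≤ G₀ ≤ G and g₀ ∈ G₀ satisfy: G₀/L is a cyclic 2-group of order ≥ 4 generated by g₀+L; G/G₀ is an elementary abelian 2-group; exp(G/L) = exp(G₀/L); S + L = (G ∖ G₀) ∪ (g₀+L); S ∩ (g₀+L) is not contained in a coset of a proper subgroup of L; and |S+L| − |S| ≤ |L| − 1. If H ≤ G satisfies |S+H| − |S| ≤ |H| − 1 and S + H ≠ G, then H ≤ G₀. -/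
open Pointwise

/-!
Suppose some `h ∈ H` lies outside `G₀` and put `T = S + L`. By (L4), the complement of `T` is
`G₀ ∖ (g₀ + L)`, of size `|G₀| - |L| ≥ 3|L|`; since it lies in `G₀` it is disjoint from its
translate by `h`, so `|T ∩ (h + T)| = |G| - 2|Tᶜ|`. On the other hand `S ∪ (h + S) ⊆ S + H`, so
`S ∩ (h + S) ⊆ T ∩ (h + T)` has at least `2|S| - |S + H|` elements, while `S + H ≠ G` leaves room
for a whole coset of `H` outside `S + H`. Together with the two small-doubling hypotheses these
counts are incompatible with `|Tᶜ| ≥ 3|L|`.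
-/

namespace AddSubgroup

variable {G : Type*} [AddGroup G]

theorem card_map_mk'_mul_card {L K : AddSubgroup G} [L.Normal] (hLK : L ≤ K) :
    Nat.card (K.map (QuotientAddGroup.mk' L)) * Nat.card L = Nat.card K := by
  rw [← relIndex_ker, QuotientAddGroup.ker_mk', ← relIndex_bot_left, ← relIndex_bot_left,
    mul_comm, relIndex_mul_relIndex _ _ _ bot_le hLK]

theorem disjoint_vadd_set_of_subset_of_notMem {K : AddSubgroup G} {X : Set G}
    (hX : X ⊆ K) {b : G} (hb : b ∉ K) : Disjoint X (b +ᵥ X) := by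
  rw [Set.disjoint_left]
  rintro _ hx ⟨y, hy, rfl⟩
  exact hb (by simpa using K.sub_mem (hX hx) (hX hy))

end AddSubgroup

section

variable {G : Type*} [AddCommGroup G] [Finite G]

/-- A point outside `A + H` carries a whole coset of `H` outside `A + H`. -/
theorem AddSubgroup.ncard_add_ncard_add_le_card (H : AddSubgroup G) {A : Set G}
    (hA : A + (H : Set G) ≠ Set.univ) :
    (H : Set G).ncard + (A + (H : Set G)).ncard ≤ Nat.card G := by
  obtain ⟨c, hc⟩ := (Set.ne_univ_iff_exists_notMem _).mp hA
  have hdisj : Disjoint (c +ᵥ (H : Set G)) (A + (H : Set G)) := by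
    rw [Set.disjoint_left]
    rintro _ ⟨k, hk, rfl⟩ ⟨a, ha, k', hk', hak⟩
    refine hc ⟨a, ha, k' - k, H.sub_mem hk' hk, ?_⟩
    change a + k' = c + k at hak
    change a + (k' - k) = c
    rw [← add_sub_assoc, hak]
    abel
  rw [← Set.ncard_vadd_set c, ← Set.ncard_union_eq hdisj, ← Set.ncard_univ]
  exact Set.ncard_le_ncard (Set.subset_univ _)

theorem Set.two_mul_ncard_le_ncard_add_add_ncard_inter_vadd {A B : Set G} {b : G}
    (h0 : (0 : G) ∈ B) (hb : b ∈ B) :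
    2 * A.ncard ≤ (A + B).ncard + (A ∩ (b +ᵥ A)).ncard := by
  have hunion : A ∪ (b +ᵥ A) ⊆ A + B := by
    refine Set.union_subset (Set.subset_add_left A h0) ?_
    rintro _ ⟨a, ha, rfl⟩
    exact ⟨a, ha, b, hb, add_comm a b⟩
  have := Set.ncard_union_add_ncard_inter A (b +ᵥ A)
  rw [Set.ncard_vadd_set] at this
  have := Set.ncard_le_ncard hunion
  omega

theorem Set.ncard_inter_vadd_add_two_mul_ncard_compl {A : Set G} {b : G}
    (h : Disjoint Aᶜ (b +ᵥ Aᶜ)) :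
    (A ∩ (b +ᵥ A)).ncard + 2 * Aᶜ.ncard = Nat.card G := by
  have hcompl : (A ∩ (b +ᵥ A))ᶜ = Aᶜ ∪ (b +ᵥ Aᶜ) := by
    rw [Set.compl_inter, Set.vadd_set_compl]
  have := Set.ncard_add_ncard_compl (A ∩ (b +ᵥ A))
  rw [hcompl, Set.ncard_union_eq h, Set.ncard_vadd_set] at this
  omega

end

theorem LcapH_lemma_general {G : Type*} [AddCommGroup G] [Fintype G]
    (S : Set G)
    (L G₀ : AddSubgroup G) (hLG₀ : L ≤ G₀) (g₀ : G) (hg₀ : g₀ ∈ G₀)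
    -- (L1): `G₀/L` is a cyclic 2-group of order ≥ 4, generated by `g₀ + L`
    (hL1b : 4 ≤ Nat.card (G₀.map (QuotientAddGroup.mk' L)))
    -- (L4): `S + L = (G ∖ G₀) ∪ (g₀ + L)` and `S ∩ (g₀+L)` is not contained
    -- in a coset of a proper subgroup of `L`
    (hL4a : S + (L : Set G) = (Set.univ \ (G₀ : Set G)) ∪ ({g₀} + (L : Set G)))
    -- `|S+L| − |S| ≤ |L| − 1`
    (hSL : ((S + (L : Set G)).ncard : ℤ) - S.ncard ≤ ((L : Set G)).ncard - 1)
    (H : AddSubgroup G)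
    (hH : ((S + (H : Set G)).ncard : ℤ) - S.ncard ≤ ((H : Set G)).ncard - 1)
    (hHG : S + (H : Set G) ≠ Set.univ) :
    H ≤ G₀ := by
  intro h hh
  by_contra hhG₀
  set T := S + (L : Set G)
  have hcoset : g₀ +ᵥ (L : Set G) ⊆ G₀ := by
    rw [← vadd_coe_set hg₀]
    exact Set.vadd_set_mono hLG₀
  have hTcompl : Tᶜ = (G₀ : Set G) \ (g₀ +ᵥ (L : Set G)) := by
    rw [hL4a, Set.singleton_add]
    ext x
    simp only [Set.mem_compl_iff, Set.mem_union, Set.mem_sdiff, Set.mem_univ, true_and]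
    tauto
  have hTcompl_card : Tᶜ.ncard + (L : Set G).ncard = (G₀ : Set G).ncard := by
    rw [hTcompl, ← Set.ncard_vadd_set g₀ (L : Set G), Set.ncard_sdiff_add_ncard_of_subset hcoset]
  have hindex : 4 * (L : Set G).ncard ≤ (G₀ : Set G).ncard := by
    simp only [← Nat.card_coe_set_eq, SetLike.coe_sort_coe,
      ← AddSubgroup.card_map_mk'_mul_card hLG₀]
    exact Nat.mul_le_mul_right _ hL1b
  have hST : S ⊆ T := Set.subset_add_left S L.zero_mem
  have hinter_T := Set.ncard_inter_vadd_add_two_mul_ncard_compl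
    (AddSubgroup.disjoint_vadd_set_of_subset_of_notMem (hTcompl ▸ Set.sdiff_subset) hhG₀)
  have hinter_S : (S ∩ (h +ᵥ S)).ncard ≤ (T ∩ (h +ᵥ T)).ncard :=
    Set.ncard_le_ncard (Set.inter_subset_inter hST (Set.vadd_set_mono hST))
  have hdoubling := Set.two_mul_ncard_le_ncard_add_add_ncard_inter_vadd (A := S) H.zero_mem hh
  have hcoset_H := H.ncard_add_ncard_add_le_card hHG
  have hT_card := Set.ncard_add_ncard_compl T
  omega

/-- Lemma 3: suppose the proper subset `S ⊂ G`, subgroups `L ≤ G₀ ≤ G` and `g₀ ∈ G₀`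
satisfy conditions (L1)–(L4), and moreover `|S+L| − |S| ≤ |L| − 1`. If `H ≤ G` satisfies
`|S+H| − |S| ≤ |H| − 1` and `S + H ≠ G`, then `H ≤ G₀`. -/
theorem LcapH_lemma {G : Type*} [AddCommGroup G] [Fintype G]
    (S : Set G) (hS : S ≠ Set.univ)
    (L G₀ : AddSubgroup G) (hLG₀ : L ≤ G₀) (g₀ : G) (hg₀ : g₀ ∈ G₀)
    -- (L1): `G₀/L` is a cyclic 2-group of order ≥ 4, generated by `g₀ + L`
    (hL1a : ∃ k : ℕ, Nat.card (G₀.map (QuotientAddGroup.mk' L)) = 2 ^ k)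
    (hL1b : 4 ≤ Nat.card (G₀.map (QuotientAddGroup.mk' L)))
    (hL1c : AddSubgroup.closure {QuotientAddGroup.mk' L g₀} = G₀.map (QuotientAddGroup.mk' L))
    -- (L2): `G/G₀` is an elementary abelian 2-group
    (hL2 : ∀ x : G ⧸ G₀, x + x = 0)
    -- (L3): `exp(G/L) = exp(G₀/L)`
    (hL3 : AddMonoid.exponent (G ⧸ L) = AddMonoid.exponent (G₀.map (QuotientAddGroup.mk' L)))
    -- (L4): `S + L = (G ∖ G₀) ∪ (g₀ + L)` and `S ∩ (g₀+L)` is not contained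
    -- in a coset of a proper subgroup of `L`
    (hL4a : S + (L : Set G) = (Set.univ \ (G₀ : Set G)) ∪ ({g₀} + (L : Set G)))
    (hL4b : ¬ ∃ R : AddSubgroup G, R < L ∧ ∃ x : G, S ∩ ({g₀} + (L : Set G)) ⊆ {x} + (R : Set G))
    -- `|S+L| − |S| ≤ |L| − 1`
    (hSL : ((S + (L : Set G)).ncard : ℤ) - S.ncard ≤ ((L : Set G)).ncard - 1)
    (H : AddSubgroup G)
    (hH : ((S + (H : Set G)).ncard : ℤ) - S.ncard ≤ ((H : Set G)).ncard - 1)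
    (hHG : S + (H : Set G) ≠ Set.univ) :
    H ≤ G₀ :=
  LcapH_lemma_general S L G₀ hLG₀ g₀ hg₀ hL1b hL4a hSL H hH hHG
end

section
/- Let S ⊆ G with G a finite abelian group, suppose κ(Cay⁺(S)) < |S|, and let A be a fragment of Cay⁺(S). Then A ⊆ S − A. -/
open Pointwise

/-
If `a ∈ A` has no representation `s - a'` with `s ∈ S`, `a' ∈ A`, then no translate `s - a` of an
element of `S` lies in `A`, so the whole translate `S - a`, of size `|S|`, sits in `N(A) ∖ A`; this
contradicts `|N(A) ∖ A| = κ < |S|`.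
-/

namespace Set

variable {G : Type*} [AddCommGroup G]

theorem neg_vadd_subset_sub_diff {S A : Set G} {a : G} (ha : a ∈ A) (hna : a ∉ S - A) :
    -a +ᵥ S ⊆ (S - A) \ A := by
  rintro _ ⟨s, hs, rfl⟩
  refine ⟨⟨s, hs, a, ha, by simp [sub_eq_neg_add]⟩, fun hsa => hna ?_⟩
  exact ⟨s, hs, -a +ᵥ s, hsa, by simp⟩

theorem ncard_le_ncard_sub_diff [Finite G] {S A : Set G} {a : G} (ha : a ∈ A) (hna : a ∉ S - A) :
    S.ncard ≤ ((S - A) \ A).ncard :=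
  ncard_vadd_set (-a) S ▸ ncard_le_ncard (neg_vadd_subset_sub_diff ha hna)

end Set

theorem fragment_subset_general {G : Type*} [AddCommGroup G] [Fintype G]
    (S : Set G) (hκ : vertexConnectivity (addCayley S) < S.ncard)
    (A : Set G)
    (hfrag1 : ((S - A) \ A).ncard = vertexConnectivity (addCayley S)) :
    A ⊆ S - A := by
  intro a ha
  by_contra hna
  have := Set.ncard_le_ncard_sub_diff ha hna
  omega

/-- If `κ(Cay⁺(S)) < |S|` and `A` is a fragment of `Cay⁺(S)`, then `A ⊆ S − A`. -/
theorem fragment_subset {G : Type*} [AddCommGroup G] [Fintype G]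
    (S : Set G) (hκ : vertexConnectivity (addCayley S) < S.ncard)
    (A : Set G) (hA : A.Nonempty)
    (hfrag1 : ((S - A) \ A).ncard = vertexConnectivity (addCayley S))
    (hfrag2 : (S - A) ∪ A ≠ Set.univ) :
    A ⊆ S - A :=
  fragment_subset_general S hκ A hfrag1
end

section
/- Let G be a finite abelian group and S ⊂ G a proper subset with S ∩ (2∗G) ≠ ∅ (in particular this holds whenever G has odd order and S is non-empty). Then κ(Cay⁺(S)) = min{|S+H| − |H| : H ≤ G, S + H ≠ G}. -/
open Pointwise

/-!
Write `κ(S)` for the least value of `|S + C| - |C|` over nonempty `C` with `S + C ≠ G`.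
A component `A` of `Cay⁺(S)` minus a vertex cut `X` satisfies `S - A ⊆ A ∪ X`, so `|X| ≥ κ(S)`.
Conversely, if `2g ∈ S` and `H ≤ G` with `S + H ≠ G`, all neighbours of the coset `g + H` lie in
`S + H - g`, so deleting `(S + H - g) \ (g + H)` disconnects the graph with `|S + H| - |H|`
vertices.

It remains to see that `κ(S)` is attained at a subgroup (Hamidoune's atoms). Since
`C ↦ |S + C|` is submodular, two minimisers of least size (atoms) that meet are equal, as long
as the atoms of `S` are no larger than those of `-S`: the complement of `S + A` is a minimiser
for `-S`, which rules out `S + (A ∪ A') = G`. So the atom through `0` is its own stabiliser.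
Otherwise one works with `-S`, whose atom `H` gives `|S + H| = |-S + H|`.
-/

open Set

lemma SimpleGraph.not_preconnected_induce_iff {V : Type*} {Γ : SimpleGraph V} {U : Set V} :
    ¬(Γ.induce U).Preconnected ↔
      ∃ A ⊆ U, A.Nonempty ∧ (U \ A).Nonempty ∧ ∀ a ∈ A, ∀ b ∈ U \ A, ¬Γ.Adj a b := by
  constructor
  · intro h
    simp only [SimpleGraph.Preconnected, not_forall] at h
    obtain ⟨x, y, hxy⟩ := h
    refine ⟨Subtype.val '' {z | (Γ.induce U).Reachable x z}, by simp, ⟨x, x, .rfl, rfl⟩,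
      ⟨y, y.2, fun ⟨z, hz, hzy⟩ => hxy (Subtype.ext hzy ▸ hz)⟩, ?_⟩
    rintro _ ⟨a, ha, rfl⟩ b ⟨hbU, hb⟩ hab
    exact hb ⟨⟨b, hbU⟩, ha.trans (SimpleGraph.Adj.reachable hab), rfl⟩
  · rintro ⟨A, hAU, ⟨a, ha⟩, ⟨b, hbU, hbA⟩, hcut⟩ hcon
    obtain ⟨p⟩ := hcon ⟨a, hAU ha⟩ ⟨b, hbU⟩
    obtain ⟨d, -, hd1, hd2⟩ := p.exists_boundary_dart {z | (z : V) ∈ A} ha hbA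
    exact hcut _ hd1 _ ⟨d.snd.2, hd2⟩ d.adj

namespace Isoperimetric

variable {G : Type*} [AddCommGroup G]

def IsAdmissible (S C : Set G) : Prop := C.Nonempty ∧ S + C ≠ univ

noncomputable def isoperimetricNumber (S : Set G) : ℕ :=
  sInf {n | ∃ C, IsAdmissible S C ∧ (S + C).ncard - C.ncard = n}

def IsFragment (S C : Set G) : Prop :=
  IsAdmissible S C ∧ (S + C).ncard = isoperimetricNumber S + C.ncard

noncomputable def atomCard (S : Set G) : ℕ :=
  sInf {n | ∃ C, IsFragment S C ∧ C.ncard = n}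

def IsAtom (S A : Set G) : Prop := IsFragment S A ∧ A.ncard = atomCard S

variable {S C A A' : Set G}

lemma isAdmissible_zero (hSu : S ≠ univ) : IsAdmissible S {0} :=
  ⟨singleton_nonempty 0, by simpa using hSu⟩

lemma IsAdmissible.inter (hA : IsAdmissible S A) (hmeet : (A ∩ A').Nonempty) :
    IsAdmissible S (A ∩ A') :=
  ⟨hmeet, fun hu => hA.2 (univ_subset_iff.1 (hu ▸ add_subset_add_left inter_subset_left))⟩

lemma IsFragment.atomCard_le (h : IsFragment S C) : atomCard S ≤ C.ncard :=
  Nat.sInf_le ⟨C, h, rfl⟩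

lemma IsFragment.vadd (h : IsFragment S C) (g : G) : IsFragment S (g +ᵥ C) := by
  obtain ⟨⟨hC, hSC⟩, hcard⟩ := h
  refine ⟨⟨hC.vadd_set, ?_⟩, ?_⟩
  · rwa [add_vadd_comm, Ne, vadd_set_eq_univ]
  · rwa [add_vadd_comm, ncard_vadd_set, ncard_vadd_set]

lemma IsAtom.vadd (h : IsAtom S A) (g : G) : IsAtom S (g +ᵥ A) :=
  ⟨h.1.vadd g, by rw [ncard_vadd_set, h.2]⟩

lemma neg_add_compl_add_subset_compl (S C : Set G) : -S + (S + C)ᶜ ⊆ Cᶜ := by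
  rintro _ ⟨s, hs, x, hx, rfl⟩ hc
  exact hx (by simpa using add_mem_add (mem_neg.1 hs) hc)

lemma IsAdmissible.compl_add (h : IsAdmissible S C) : IsAdmissible (-S) (S + C)ᶜ := by
  obtain ⟨⟨c, hc⟩, hSC⟩ := h
  exact ⟨nonempty_compl.2 hSC, fun hu => neg_add_compl_add_subset_compl S C (hu ▸ mem_univ c) hc⟩

lemma neg_ne_univ (hSu : S ≠ univ) : -S ≠ univ := by
  rwa [Ne, ← neg_univ, neg_inj]

variable [Finite G]

lemma ncard_le_ncard_add (hS : S.Nonempty) (C : Set G) : C.ncard ≤ (S + C).ncard := by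
  obtain ⟨a, ha⟩ := hS
  rw [← ncard_vadd_set a C]
  exact ncard_le_ncard (vadd_set_subset_add ha)

lemma IsAdmissible.isoperimetricNumber_add_ncard_le (hS : S.Nonempty) (hC : IsAdmissible S C) :
    isoperimetricNumber S + C.ncard ≤ (S + C).ncard := by
  have hmin : isoperimetricNumber S ≤ (S + C).ncard - C.ncard := Nat.sInf_le ⟨C, hC, rfl⟩
  have := ncard_le_ncard_add hS C
  omega

lemma isoperimetricNumber_add_one_le_ncard (hS : S.Nonempty) (hSu : S ≠ univ) :
    isoperimetricNumber S + 1 ≤ S.ncard := by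
  simpa using (isAdmissible_zero hSu).isoperimetricNumber_add_ncard_le hS

lemma exists_isFragment (hS : S.Nonempty) (hSu : S ≠ univ) : ∃ C, IsFragment S C := by
  obtain ⟨C, hC, hmin⟩ := Nat.sInf_mem
    (⟨_, {0}, isAdmissible_zero hSu, rfl⟩ :
      {n | ∃ C, IsAdmissible S C ∧ (S + C).ncard - C.ncard = n}.Nonempty)
  have := ncard_le_ncard_add hS C
  exact ⟨C, hC, by unfold isoperimetricNumber; omega⟩

lemma exists_isAtom (hS : S.Nonempty) (hSu : S ≠ univ) : ∃ A, IsAtom S A := by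
  obtain ⟨C, hC⟩ := exists_isFragment hS hSu
  exact Nat.sInf_mem (⟨_, C, hC, rfl⟩ : {n | ∃ C, IsFragment S C ∧ C.ncard = n}.Nonempty)

lemma ncard_neg_add_compl_sub_le (S C : Set G) :
    (-S + (S + C)ᶜ).ncard - (S + C)ᶜ.ncard ≤ (S + C).ncard - C.ncard := by
  have := ncard_le_ncard (neg_add_compl_add_subset_compl S C)
  have := ncard_add_ncard_compl C
  have := ncard_add_ncard_compl (S + C)
  omega

lemma isoperimetricNumber_neg_le (hS : S.Nonempty) (hSu : S ≠ univ) :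
    isoperimetricNumber (-S) ≤ isoperimetricNumber S := by
  obtain ⟨C, hC, hcard⟩ := exists_isFragment hS hSu
  have := ncard_neg_add_compl_sub_le S C
  have : isoperimetricNumber (-S) ≤ _ := Nat.sInf_le ⟨_, hC.compl_add, rfl⟩
  omega

lemma isoperimetricNumber_neg (hS : S.Nonempty) (hSu : S ≠ univ) :
    isoperimetricNumber (-S) = isoperimetricNumber S :=
  (isoperimetricNumber_neg_le hS hSu).antisymm <| by
    simpa using isoperimetricNumber_neg_le hS.neg (neg_ne_univ hSu)

lemma IsFragment.compl_add (hS : S.Nonempty) (hSu : S ≠ univ) (h : IsFragment S C) :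
    IsFragment (-S) (S + C)ᶜ := by
  have := ncard_neg_add_compl_sub_le S C
  have := h.1.compl_add.isoperimetricNumber_add_ncard_le hS.neg
  have := isoperimetricNumber_neg hS hSu
  exact ⟨h.1.compl_add, by have := h.2; omega⟩

lemma IsFragment.neg (hS : S.Nonempty) (hSu : S ≠ univ) (h : IsFragment (-S) C) :
    IsFragment S (-C) := by
  have hSC : S + -C = -(-S + C) := by rw [neg_add, neg_neg]
  obtain ⟨⟨hC, hSCu⟩, hcard⟩ := h
  refine ⟨⟨hC.neg, ?_⟩, ?_⟩
  · rw [hSC]; exact neg_ne_univ hSCu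
  · rw [hSC, ncard_neg, ncard_neg, hcard, isoperimetricNumber_neg hS hSu]

lemma ncard_add_union_add_ncard_add_inter_le (S A A' : Set G) :
    (S + (A ∪ A')).ncard + (S + (A ∩ A')).ncard ≤ (S + A).ncard + (S + A').ncard := by
  rw [add_union, ← ncard_union_add_ncard_inter (S + A)]
  exact Nat.add_le_add_left (ncard_le_ncard add_inter_subset) _

lemma IsFragment.inter (hS : S.Nonempty) (hA : IsFragment S A) (hA' : IsFragment S A')
    (hmeet : (A ∩ A').Nonempty) (hunion : S + (A ∪ A') ≠ univ) : IsFragment S (A ∩ A') := by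
  have hinter := hA.1.inter hmeet
  have := hinter.isoperimetricNumber_add_ncard_le hS
  have := (show IsAdmissible S (A ∪ A') from
    ⟨hA.1.1.mono subset_union_left, hunion⟩).isoperimetricNumber_add_ncard_le hS
  have := ncard_add_union_add_ncard_add_inter_le S A A'
  have := ncard_union_add_ncard_inter A A'
  exact ⟨hinter, by have := hA.2; have := hA'.2; omega⟩

lemma IsAtom.eq_of_inter_nonempty (hS : S.Nonempty) (hSu : S ≠ univ)
    (hle : atomCard S ≤ atomCard (-S)) (hA : IsAtom S A) (hA' : IsAtom S A')
    (hmeet : (A ∩ A').Nonempty) : A = A' := by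
  have hunion : S + (A ∪ A') ≠ univ := by
    intro hu
    -- otherwise `(S + A)ᶜ` would be a fragment of `-S` smaller than the atom `A`
    have hdual := (hA.1.compl_add hS hSu).atomCard_le
    have hcompl := ncard_add_ncard_compl (S + A)
    have hsubmod := ncard_add_union_add_ncard_add_inter_le S A A'
    have hinter := (hA.1.1.inter hmeet).isoperimetricNumber_add_ncard_le hS
    rw [hu, ncard_univ] at hsubmod
    have := hmeet.ncard_pos
    have := hA.1.2; have := hA'.1.2; have := hA.2; have := hA'.2
    omega
  have hsmall := (hA.1.inter hS hA'.1 hmeet hunion).atomCard_le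
  have hleft := eq_of_subset_of_ncard_le inter_subset_left (by rw [hA.2]; exact hsmall)
  have hright := eq_of_subset_of_ncard_le inter_subset_right (by rw [hA'.2]; exact hsmall)
  rw [← hleft, hright]

lemma exists_addSubgroup_isAtom (hS : S.Nonempty) (hSu : S ≠ univ)
    (hle : atomCard S ≤ atomCard (-S)) : ∃ H : AddSubgroup G, IsAtom S H := by
  obtain ⟨A, hA⟩ := exists_isAtom hS hSu
  obtain ⟨a, ha⟩ := hA.1.1.1
  set A₀ := -a +ᵥ A
  have hA₀ : IsAtom S A₀ := hA.vadd (-a)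
  have h0 : (0 : G) ∈ A₀ := ⟨a, ha, neg_add_cancel a⟩
  -- for `x ∈ A₀`, the atom `x +ᵥ A₀` meets `A₀` at `x`, hence equals it
  have hstab : (AddAction.stabilizer G A₀ : Set G) = A₀ := by
    ext x
    rw [SetLike.mem_coe, AddAction.mem_stabilizer_iff]
    have hx : x ∈ x +ᵥ A₀ := ⟨0, h0, add_zero x⟩
    refine ⟨fun hfix => hfix ▸ hx, fun hxA => ?_⟩
    exact (hA₀.vadd x).eq_of_inter_nonempty hS hSu hle hA₀ ⟨x, hx, hxA⟩
  exact ⟨_, hstab ▸ hA₀⟩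

theorem exists_addSubgroup_isFragment (hS : S.Nonempty) (hSu : S ≠ univ) :
    ∃ H : AddSubgroup G, IsFragment S H := by
  rcases le_total (atomCard S) (atomCard (-S)) with hle | hle
  · obtain ⟨H, hH⟩ := exists_addSubgroup_isAtom hS hSu hle
    exact ⟨H, hH.1⟩
  · obtain ⟨H, hH⟩ :=
      exists_addSubgroup_isAtom hS.neg (neg_ne_univ hSu) (by rwa [neg_neg])
    exact ⟨H, by simpa using hH.1.neg hS hSu⟩

lemma vertexConnectivity_addCayley_le (H : AddSubgroup G) (hSH : S + (H : Set G) ≠ univ) {g : G}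
    (hg : g + g ∈ S + (H : Set G)) :
    vertexConnectivity (addCayley S) ≤ (S + H).ncard - (H : Set G).ncard := by
  set T := -g +ᵥ (S + H)
  have hmemT {x : G} : x ∈ T ↔ g + x ∈ S + H := by
    rw [mem_vadd_set_iff_neg_vadd_mem, neg_neg, vadd_eq_add]
  obtain ⟨s, hs, h', hh', hsum⟩ := hg
  have hcoset : g +ᵥ (H : Set G) ⊆ T := by
    rintro _ ⟨h, hh, rfl⟩
    refine hmemT.2 ⟨s, hs, h' + h, H.add_mem hh' hh, ?_⟩
    simp only [vadd_eq_add] at hsum ⊢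
    rw [← add_assoc, hsum, add_assoc]
  have hnbr : ∀ a ∈ g +ᵥ (H : Set G), ∀ b, a + b ∈ S → b ∈ T := by
    rintro _ ⟨h, hh, rfl⟩ b hb
    refine hmemT.2 ⟨_, hb, -h, H.neg_mem hh, ?_⟩
    simp only [vadd_eq_add]
    abel
  obtain ⟨b, hb⟩ : Tᶜ.Nonempty := nonempty_compl.2 (by rwa [Ne, vadd_set_eq_univ])
  refine Nat.sInf_le ⟨T \ (g +ᵥ (H : Set G)), by rw [ncard_sdiff hcoset, ncard_vadd_set,
    ncard_vadd_set], Or.inr fun hcon => ?_⟩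
  refine SimpleGraph.not_preconnected_induce_iff.2 ?_ hcon.preconnected
  refine ⟨g +ᵥ (H : Set G), fun a ha hT => hT.2 ha, ⟨g, 0, H.zero_mem, add_zero g⟩,
    ⟨b, fun hbT => hb hbT.1, fun hbH => hb (hcoset hbH)⟩, ?_⟩
  rintro a ha c ⟨hcX, hcH⟩ ⟨-, hac⟩
  exact hcX ⟨hnbr a ha c hac, hcH⟩

lemma isoperimetricNumber_le_ncard_of_not_preconnected (hS : S.Nonempty) {X : Set G}
    (h : ¬((addCayley S).induce Xᶜ).Preconnected) : isoperimetricNumber S ≤ X.ncard := by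
  obtain ⟨A, -, hA, ⟨b, hbX, hbA⟩, hcut⟩ := SimpleGraph.not_preconnected_induce_iff.1 h
  have hsub : S + -A ⊆ A ∪ X := by
    rintro _ ⟨σ, hσ, a, ha, rfl⟩
    by_contra hout
    simp only [mem_union, not_or] at hout
    refine hcut (-a) ha (σ + a) ⟨hout.2, hout.1⟩ ⟨fun he => hout.1 (he ▸ ha), ?_⟩
    simpa using hσ
  have hadm : IsAdmissible S (-A) :=
    ⟨hA.neg, fun hu => (hsub (hu ▸ mem_univ b)).elim hbA hbX⟩
  have := hadm.isoperimetricNumber_add_ncard_le hS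
  have := ncard_le_ncard hsub
  have := ncard_union_le A X
  rw [ncard_neg] at *
  omega

lemma isoperimetricNumber_le_vertexConnectivity (hS : S.Nonempty) (hSu : S ≠ univ) :
    isoperimetricNumber S ≤ vertexConnectivity (addCayley S) := by
  refine le_csInf ⟨_, univ, rfl, Or.inl (by simp)⟩ ?_
  rintro _ ⟨X, rfl, hX⟩
  by_cases hsmall : Xᶜ.ncard ≤ 1
  · have := isoperimetricNumber_add_one_le_ncard hS hSu
    have := ncard_lt_card hSu
    have := ncard_add_ncard_compl X
    omega
  · have : Nonempty ↥Xᶜ := (nonempty_of_ncard_ne_zero (by omega)).to_subtype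
    exact isoperimetricNumber_le_ncard_of_not_preconnected hS fun hpre =>
      hX.resolve_left hsmall ⟨hpre⟩

end Isoperimetric

open Isoperimetric

/-- Corollary: if `S ∩ 2∗G ≠ ∅` (in particular whenever `G` has odd order and `S ≠ ∅`),
then `κ(Cay⁺(S)) = min{|S+H| − |H| : H ≤ G, S + H ≠ G}`. -/
theorem corollary_2astS {G : Type*} [AddCommGroup G] [Fintype G]
    (S : Set G) (hS : S ≠ Set.univ)
    (h2 : (S ∩ {x : G | ∃ g : G, x = g + g}).Nonempty) :
    vertexConnectivity (addCayley S)
      = sInf {n : ℕ | ∃ H : AddSubgroup G, S + (H : Set G) ≠ Set.univ ∧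
          n = (S + (H : Set G)).ncard - (H : Set G).ncard} := by
  obtain ⟨_, hgS, g, rfl⟩ := h2
  obtain ⟨H, hH⟩ := exists_addSubgroup_isFragment ⟨_, hgS⟩ hS
  apply le_antisymm
  · refine le_csInf ⟨_, H, hH.1.2, rfl⟩ ?_
    rintro _ ⟨H', hH', rfl⟩
    exact vertexConnectivity_addCayley_le H' hH' (by simpa using add_mem_add hgS H'.zero_mem)
  · refine (Nat.sInf_le ?_).trans (isoperimetricNumber_le_vertexConnectivity ⟨_, hgS⟩ hS)
    exact ⟨H, hH.1.2, by have := hH.2; omega⟩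
end

section
/- Let G be a finite abelian group and S ⊂ G a proper subset such that Cay⁺(S) is connected. Then κ(Cay⁺(S)) ≥ |S|/2. -/
open Pointwise

/-!
Let `T` be a separating set. Then `Tᶜ` splits into nonempty `A`, `B` with no edges between them,
i.e. `A + B` misses `S`. A weak Kneser inequality gives a set `s' ⊇ A` with stabilizer `H` and
`b ∈ B` such that `b + s' ⊆ A + B` and `|A| + |B| ≤ |s'| + |H|`; so `S` lies in the `H`-periodic
set `(b + s')ᶜ`, of size at most `|T| + |H|`. If `|S| > 2|T|`, this set has fewer than `2|H|`
elements, hence is a single coset `s₀ + H`, and connectedness of `Cay⁺(S)` forces `H` to have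
index `2` with `s₀ ∉ H`. Then `s'`, and with it `A`, lies in one coset of `H`, so for `u ∈ A` and
`s ∈ S` the vertex `s - u` is in neither `A` (that would put `s` in `H`) nor `B` (no `A`–`B` edges).
Hence `S - u ⊆ T` and `|S| ≤ |T|`, a contradiction.
-/

open Finset

namespace Finset

variable {G : Type*} [AddCommGroup G] [DecidableEq G]

theorem card_le_card_stabilizer_of_sub_mem {s t : Finset G} (hs : s.Nonempty) {b : G}
    (hper : ∀ b' ∈ t, b' - b ∈ AddAction.stabilizer G s) :
    #t ≤ Nat.card (AddAction.stabilizer G s) := by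
  have hfin : (AddAction.stabilizer G s : Set G).Finite := by
    rw [← AddAction.stabilizer_coe_finset]
    exact AddAction.stabilizer_finite (by simpa using hs) s.finite_toSet
  rw [← Set.ncard_coe_finset, ← SetLike.coe_sort_coe, Nat.card_coe_set_eq]
  exact Set.ncard_le_ncard_of_injOn (· - b) hper (fun x _ y _ h => sub_left_injective h) hfin

/-- A weak form of Kneser's theorem, obtained by iterating the Dyson e-transform. -/
theorem exists_superset_vadd_subset_add (s t : Finset G) (hs : s.Nonempty) (ht : t.Nonempty) :
    ∃ s' : Finset G, s ⊆ s' ∧ ∃ b ∈ t, b +ᵥ s' ⊆ s + t ∧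
      #s + #t ≤ #s' + Nat.card (AddAction.stabilizer G s') := by
  induction t using Finset.strongInduction generalizing s with
  | H t ih =>
    obtain ⟨b, hb⟩ := ht
    by_cases hper : ∀ b' ∈ t, b' - b ∈ AddAction.stabilizer G s
    · refine ⟨s, subset_rfl, b, hb, add_comm t s ▸ vadd_finset_subset_add hb, ?_⟩
      have := card_le_card_stabilizer_of_sub_mem hs hper
      omega
    push Not at hper
    obtain ⟨b', hb', hb'b⟩ := hper
    rw [AddAction.mem_stabilizer_finset'] at hb'b
    push Not at hb'b
    obtain ⟨a, ha, hab'⟩ := hb'b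
    rw [vadd_eq_add] at hab'
    set x := addDysonETransform (a - b) (s, t)
    have hbx : b ∈ x.2 := by
      simp only [x, addDysonETransform_snd, mem_inter, mem_neg_vadd_finset_iff, vadd_eq_add,
        sub_add_cancel]
      exact ⟨hb, ha⟩
    have hb'x : b' ∉ x.2 := by
      simp only [x, addDysonETransform_snd, mem_inter, mem_neg_vadd_finset_iff, not_and,
        vadd_eq_add]
      intro _
      rwa [show a - b + b' = b' - b + a by abel]
    have hxt : x.2 ⊂ t := ssubset_of_subset_of_ne inter_subset_left (fun h => hb'x (h ▸ hb'))
    obtain ⟨s', hxs', b'', hb'', hsum, hcard⟩ :=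
      ih x.2 hxt x.1 (hs.mono subset_union_left) ⟨b, hbx⟩
    refine ⟨s', subset_union_left.trans hxs', b'', inter_subset_left hb'',
      hsum.trans (addDysonETransform.subset _ _), ?_⟩
    have : #x.1 + #x.2 = #s + #t := addDysonETransform.card _ _
    omega

end Finset

namespace AddAction

variable {G : Type*} [AddCommGroup G] [Fintype G] [DecidableEq G]

theorem sub_mem_stabilizer_of_card_compl_lt {s : Finset G} {x y : G} (hx : x ∉ s) (hy : y ∉ s)
    (hcard : #sᶜ < 2 * Nat.card (stabilizer G s)) : x - y ∈ stabilizer G s := by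
  set H := stabilizer G s
  by_contra hxy
  have hcoset : ∀ z ∉ s, z +ᵥ (H : Set G) ⊆ ↑sᶜ := by
    rintro z hz _ ⟨h, hh, rfl⟩
    simp only [coe_compl, Set.mem_compl_iff, mem_coe, vadd_eq_add]
    intro hzh
    apply hz
    simpa using mem_stabilizer_finset'.1 (neg_mem hh) hzh
  have hdisj : Disjoint (x +ᵥ (H : Set G)) (y +ᵥ (H : Set G)) := by
    rw [Set.disjoint_left]
    rintro _ ⟨h₁, hh₁, rfl⟩ ⟨h₂, hh₂, hxy'⟩
    apply hxy
    simp only [vadd_eq_add] at hxy'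
    rw [show x - y = h₂ - h₁ by rw [sub_eq_sub_iff_add_eq_add, ← hxy', add_comm]]
    exact sub_mem hh₂ hh₁
  have := Set.ncard_le_ncard (Set.union_subset (hcoset x hx) (hcoset y hy))
  rw [Set.ncard_union_eq hdisj, Set.ncard_vadd_set, Set.ncard_vadd_set, Set.ncard_coe_finset,
    ← Nat.card_coe_set_eq, SetLike.coe_sort_coe] at this
  omega

end AddAction

section addCayley

variable {G : Type*} [AddCommGroup G] {S : Set G} {H : AddSubgroup G} {s₀ : G}

/-- Each edge of `Cay⁺(S)` with `S ⊆ s₀ + H` maps the coset `x + H` to `s₀ - x + H`. -/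
theorem sub_mem_or_add_sub_mem_of_addCayley_reachable (hSH : ∀ s ∈ S, s - s₀ ∈ H) {x y : G}
    (hxy : (addCayley S).Reachable x y) : x - y ∈ H ∨ x + y - s₀ ∈ H := by
  obtain ⟨p⟩ := hxy
  induction p with
  | nil => simp
  | @cons x y z hadj _ ih =>
    have hxy : x + y - s₀ ∈ H := hSH _ hadj.2
    rcases ih with h | h
    · right
      convert sub_mem hxy h using 1
      abel
    · left
      convert sub_mem hxy h using 1
      abel

theorem mem_or_sub_mem_of_addCayley_connected (hconn : (addCayley S).Connected)
    (hSH : ∀ s ∈ S, s - s₀ ∈ H) (g : G) : g ∈ H ∨ g - s₀ ∈ H := by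
  simpa [or_comm] using
    sub_mem_or_add_sub_mem_of_addCayley_reachable hSH (hconn.preconnected g s₀)

theorem index_eq_two_of_addCayley_connected (hconn : (addCayley S).Connected)
    (hSH : ∀ s ∈ S, s - s₀ ∈ H) (hs₀ : s₀ ∉ H) : H.index = 2 := by
  refine AddSubgroup.index_eq_two_iff.2 ⟨-s₀, fun g => (xor_iff_or_and_not_and _ _).2 ⟨?_, ?_⟩⟩
  · rw [← sub_eq_add_neg]
    exact (mem_or_sub_mem_of_addCayley_connected hconn hSH g).symm
  · rintro ⟨hgs₀, hg⟩
    exact hs₀ (by simpa using sub_mem hg hgs₀)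

end addCayley

theorem SimpleGraph.exists_partition_of_not_connected_induce {V : Type*} (Γ : SimpleGraph V)
    {s : Set V} (hs : s.Nonempty) (h : ¬(Γ.induce s).Connected) :
    ∃ A B : Set V, A.Nonempty ∧ B.Nonempty ∧ Disjoint A B ∧ A ∪ B = s ∧
      ∀ a ∈ A, ∀ b ∈ B, ¬Γ.Adj a b := by
  have : Nonempty s := hs.to_subtype
  obtain ⟨u, v, huv⟩ : ∃ u v : s, ¬(Γ.induce s).Reachable u v := by
    simpa [SimpleGraph.connected_iff, SimpleGraph.Preconnected] using h
  refine ⟨Subtype.val '' {x | (Γ.induce s).Reachable u x},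
    Subtype.val '' {x | (Γ.induce s).Reachable u x}ᶜ, ⟨u, u, .refl u, rfl⟩, ⟨v, v, huv, rfl⟩,
    (Set.disjoint_image_iff Subtype.val_injective).2 disjoint_compl_right,
    by rw [← Set.image_union, Set.union_compl_self, Set.image_univ, Subtype.range_coe], ?_⟩
  rintro _ ⟨x, hx, rfl⟩ _ ⟨y, hy, rfl⟩ hxy
  exact hy (hx.trans (SimpleGraph.induce_adj.2 hxy).reachable)

section separating

variable {G : Type*} [AddCommGroup G] [Fintype G] {S : Set G}

theorem ncard_le_card_compl_union_of_card_compl_lt [DecidableEq G]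
    (hconn : (addCayley S).Connected) {A B s' : Finset G} (hAB : ∀ a ∈ A, ∀ b ∈ B, a + b ∉ S)
    {u b : G} (hu : u ∈ A) (hAs' : A ⊆ s') (hSs' : ∀ s ∈ S, s - b ∉ s')
    (hsmall : #s'ᶜ < 2 * Nat.card (AddAction.stabilizer G s')) :
    S.ncard ≤ #(A ∪ B)ᶜ := by
  obtain rfl | ⟨s₀, hs₀⟩ := S.eq_empty_or_nonempty
  · simp
  set H := AddAction.stabilizer G s'
  have hper : ∀ h ∈ H, ∀ x ∈ s', h + x ∈ s' := fun h hh x hx =>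
    AddAction.mem_stabilizer_finset'.1 hh hx
  have hSH : ∀ s ∈ S, s - s₀ ∈ H := fun s hs => by
    simpa only [sub_sub_sub_cancel_right] using
      AddAction.sub_mem_stabilizer_of_card_compl_lt (hSs' s hs) (hSs' s₀ hs₀) hsmall
  have hs₀H : s₀ ∉ H := by
    intro h
    have hall : ∀ g, g ∈ H := fun g => (mem_or_sub_mem_of_addCayley_connected hconn hSH g).elim
      id (fun hg => by simpa using add_mem hg h)
    exact hSs' s₀ hs₀ (by simpa using hper _ (hall (s₀ - b - u)) u (hAs' hu))
  have hindex := index_eq_two_of_addCayley_connected hconn hSH hs₀H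
  have hs'H : ∀ x ∈ s', x + b ∈ H := by
    intro x hx
    have hnot : s₀ - b - x ∉ H := fun h => hSs' s₀ hs₀ (by simpa using hper _ h x hx)
    have := AddSubgroup.add_mem_iff_of_index_two hindex (a := s₀) (b := -(x + b))
    rw [show s₀ + -(x + b) = s₀ - b - x by abel, neg_mem_iff] at this
    tauto
  have hST : ∀ s ∈ S, s - u ∈ (A ∪ B)ᶜ := by
    intro s hs
    simp only [mem_compl, mem_union, not_or]
    refine ⟨fun hsu => hs₀H ?_, fun hsu => hAB u hu _ hsu (by simpa using hs)⟩
    have hsH : s ∈ H := by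
      convert sub_mem (add_mem (hs'H _ (hAs' hsu)) (hs'H u (hAs' hu)))
        (AddSubgroup.add_self_mem_of_index_two hindex b) using 1
      abel
    simpa using sub_mem hsH (hSH s hs)
  rw [← Set.ncard_coe_finset]
  exact Set.ncard_le_ncard_of_injOn (· - u) hST (fun x _ y _ h => sub_left_injective h)

theorem ncard_le_two_mul_card_compl_union [DecidableEq G] (hconn : (addCayley S).Connected)
    {A B : Finset G} (hA : A.Nonempty) (hB : B.Nonempty) (hAB : ∀ a ∈ A, ∀ b ∈ B, a + b ∉ S) :
    S.ncard ≤ 2 * #(A ∪ B)ᶜ := by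
  obtain ⟨u, hu⟩ := hA
  obtain ⟨s', hAs', b, -, hsum, hcard⟩ := exists_superset_vadd_subset_add A B ⟨u, hu⟩ hB
  have hSs' : ∀ s ∈ S, s - b ∉ s' := by
    intro s hs hmem
    have hs' : s ∈ b +ᵥ s' := mem_vadd_finset.2 ⟨s - b, hmem, by simp⟩
    obtain ⟨a, ha, b', hb', hab⟩ := mem_add.1 (hsum hs')
    exact hAB a ha b' hb' (hab ▸ hs)
  have hS_le : S.ncard ≤ #s'ᶜ := by
    rw [← Set.ncard_coe_finset]
    exact Set.ncard_le_ncard_of_injOn (· - b) (fun s hs => by simpa using hSs' s hs)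
      (fun x _ y _ h => sub_left_injective h)
  have hcompl_le : #s'ᶜ ≤ #(A ∪ B)ᶜ + Nat.card (AddAction.stabilizer G s') := by
    have := card_union_le A B
    have := card_le_univ (A ∪ B)
    rw [card_compl, card_compl]
    omega
  by_contra! hlt
  have := ncard_le_card_compl_union_of_card_compl_lt hconn hAB hu hAs' hSs' (by omega)
  omega

theorem ncard_le_two_mul_ncard_of_separating (hS : S ≠ Set.univ)
    (hconn : (addCayley S).Connected) {T : Set G}
    (hT : (Tᶜ).ncard ≤ 1 ∨ ¬((addCayley S).induce Tᶜ).Connected) :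
    S.ncard ≤ 2 * T.ncard := by
  have hSN : S.ncard < Nat.card G := by
    simpa using Set.ncard_lt_ncard (Set.ssubset_univ_iff.2 hS)
  have hTN : T.ncard + (Tᶜ).ncard = Nat.card G := Set.ncard_add_ncard_compl T
  obtain hsmall | hdisc := hT
  · omega
  obtain hempty | hne := (Tᶜ).eq_empty_or_nonempty
  · rw [hempty, Set.ncard_empty] at hTN
    omega
  obtain ⟨A, B, hA, hB, hdisj, hABT, hAB⟩ :=
    (addCayley S).exists_partition_of_not_connected_induce hne hdisc
  classical
  have hT : T.toFinset = (A.toFinset ∪ B.toFinset)ᶜ := by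
    ext x
    rw [Set.mem_toFinset, mem_compl, mem_union, Set.mem_toFinset, Set.mem_toFinset,
      ← Set.mem_union, hABT, Set.mem_compl_iff, not_not]
  rw [Set.ncard_eq_toFinset_card' T, hT]
  refine ncard_le_two_mul_card_compl_union hconn (by simpa using hA) (by simpa using hB) ?_
  intro a ha b hb hab
  rw [Set.mem_toFinset] at ha hb
  exact hAB a ha b hb ⟨hdisj.ne_of_mem ha hb, hab⟩

end separating

theorem exists_ncard_eq_vertexConnectivity {V : Type*} (Γ : SimpleGraph V) :
    ∃ s : Set V, s.ncard = vertexConnectivity Γ ∧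
      ((sᶜ : Set V).ncard ≤ 1 ∨ ¬(Γ.induce (sᶜ : Set V)).Connected) := by
  unfold vertexConnectivity
  exact Nat.sInf_mem (s := {k | ∃ s : Set V, s.ncard = k ∧ _})
    ⟨_, Set.univ, rfl, Or.inl (by simp)⟩

/-- Corollary: if `Cay⁺(S)` is connected, then `κ(Cay⁺(S)) ≥ |S|/2`. -/
theorem corollary_Sover2 {G : Type*} [AddCommGroup G] [Fintype G]
    (S : Set G) (hS : S ≠ Set.univ)
    (hconn : (addCayley S).Connected) :
    S.ncard ≤ 2 * vertexConnectivity (addCayley S) := by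
  obtain ⟨T, hT, hsep⟩ := exists_ncard_eq_vertexConnectivity (addCayley S)
  exact hT ▸ ncard_le_two_mul_ncard_of_separating hS hconn hsep
end

section
/- Let G be a finite non-trivial abelian group, S ⊂ G a proper subset with Cay⁺(S) connected, and let p denote the smallest order of a non-zero subgroup of G (i.e., the smallest prime divisor of |G|). Then κ(Cay⁺(S)) ≥ min{|S| − 1, p}. -/
/-!
A set `s` of vertices whose removal disconnects `Cay⁺(S)` splits the other vertices into nonempty
sets `A`, `B` with `(A + B) ∩ S = ∅`. Repeated Dyson e-transforms of `(A, B)` give a superset `A'`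
of `A`, with stabilizer `H`, and some `b ∈ B` such that `b + A' ⊆ A + B` and
`|A| + |B| ≤ |A'| + |H|`. The `H`-periodic set `G \ A'` contains `S - b`; if `|s| ≤ |S| - 2` and
`|s| < p`, this forces `|H| ≥ 2`, hence `p ≤ |H|`, so `G \ A'` has fewer than `2|H|` elements and
is a single coset of `H`. Thus `S` lies in one coset `s₀ + H`, and connectivity of `Cay⁺(S)` gives
`G = H ∪ (s₀ + H)`, so `2x ∈ H` for all `x`. Since `A + b` misses `s₀ + H`, it lies in `H`, so
`A + A ⊆ H` misses `S`, and for `a ∈ A` the translate `S - a` lies in `s`: `|S| ≤ |s|`.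
-/

open Pointwise

open Finset

theorem AddAction.stabilizer_finset_compl {G α : Type*} [AddGroup G] [AddAction G α] [Fintype α]
    [DecidableEq α] (s : Finset α) : stabilizer G sᶜ = stabilizer G s := by
  ext g
  simp only [mem_stabilizer_finset, Finset.mem_compl, not_iff_not]

theorem Finset.card_le_card_stabilizer_of_sub_mem_s19 {G : Type*} [AddGroup G] [DecidableEq G]
    {A B : Finset G} (hA : A.Nonempty) {b₀ : G}
    (hB : ∀ b ∈ B, b - b₀ ∈ AddAction.stabilizer G A) :
    #B ≤ Nat.card (AddAction.stabilizer G A) := by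
  have hfin := AddAction.stabilizer_finite (s := (A : Set G)) (by simpa using hA) A.finite_toSet
  rw [AddAction.stabilizer_coe_finset] at hfin
  rw [← Set.ncard_coe_finset, ← SetLike.coe_sort_coe, Nat.card_coe_set_eq]
  exact Set.ncard_le_ncard_of_injOn (· - b₀) hB (fun x _ y _ h => sub_left_injective h) hfin

section
variable {G : Type*} [AddCommGroup G] [DecidableEq G]

theorem Finset.exists_vadd_subset_add_card_le_stabilizer {A B : Finset G} (hA : A.Nonempty)
    (hB : B.Nonempty) :
    ∃ A' : Finset G, ∃ b ∈ B, A ⊆ A' ∧ b +ᵥ A' ⊆ A + B ∧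
      #A + #B ≤ #A' + Nat.card (AddAction.stabilizer G A') := by
  induction hn : #B using Nat.strong_induction_on generalizing A B with
  | _ n ih =>
  by_cases hstab : ∀ b ∈ B, ∀ b' ∈ B, b' - b ∈ AddAction.stabilizer G A
  · obtain ⟨b₀, hb₀⟩ := hB
    refine ⟨A, b₀, hb₀, subset_rfl, ?_, ?_⟩
    · rw [add_comm]
      exact vadd_finset_subset_add hb₀
    · have := card_le_card_stabilizer_of_sub_mem_s19 hA (hstab b₀ hb₀)
      omega
  · push Not at hstab
    obtain ⟨b, hb, b', hb', hbb'⟩ := hstab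
    rw [AddAction.mem_stabilizer_finset'] at hbb'
    push Not at hbb'
    obtain ⟨a, ha, ha'⟩ := hbb'
    set x := addDysonETransform (a - b) (A, B)
    have hx₂ (y : G) : y ∈ x.2 ↔ y ∈ B ∧ a - b + y ∈ A := by
      simp [x, ← Finset.neg_vadd_mem_iff]
    have hbx : b ∈ x.2 := (hx₂ b).2 ⟨hb, by simpa using ha⟩
    have hb'x : b' ∉ x.2 := fun h => ha' (by simpa [add_comm, add_sub] using ((hx₂ b').1 h).2)
    obtain ⟨A', c, hc, hAA', hsub, hcard⟩ := ih _
      (hn ▸ card_lt_card ⟨inter_subset_left, fun h => hb'x (h hb')⟩)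
      (A := x.1) (hA.mono subset_union_left) ⟨b, hbx⟩ rfl
    have hx : #x.1 + #x.2 = #A + #B := addDysonETransform.card _ _
    exact ⟨A', c, inter_subset_left hc, subset_union_left.trans hAA',
      hsub.trans (addDysonETransform.subset _ _), by omega⟩

theorem AddAction.sub_mem_stabilizer_of_card_lt {C : Finset G}
    (hC : #C < 2 * Nat.card (stabilizer G C)) {x y : G} (hx : x ∈ C) (hy : y ∈ C) :
    x - y ∈ stabilizer G C := by
  set H := stabilizer G C
  have hcoset {z : G} (hz : z ∈ C) : z +ᵥ (H : Set G) ⊆ C := by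
    simpa [H, stabilizer_coe_finset] using vadd_set_stabilizer_subset (s := (C : Set G)) hz
  by_contra hxy
  have hdisj : Disjoint (x +ᵥ (H : Set G)) (y +ᵥ (H : Set G)) := by
    refine Set.disjoint_left.2 ?_
    rintro _ ⟨h, hh, rfl⟩ ⟨h', hh', hxh⟩
    apply hxy
    convert H.sub_mem hh' hh using 1
    simp only [vadd_eq_add] at hxh
    rw [sub_eq_sub_iff_add_eq_add, ← hxh, add_comm]
  have hunion := Set.ncard_le_ncard (Set.union_subset (hcoset hx) (hcoset hy))
  rw [Set.ncard_union_eq hdisj (C.finite_toSet.subset (hcoset hx))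
    (C.finite_toSet.subset (hcoset hy)), Set.ncard_vadd_set, Set.ncard_vadd_set,
    ← Nat.card_coe_set_eq, SetLike.coe_sort_coe, Set.ncard_coe_finset] at hunion
  omega

end

section
variable {G : Type*} [AddCommGroup G]

theorem addCayley_mem_or_sub_mem {S : Set G} (hconn : (addCayley S).Connected)
    {H : AddSubgroup G} {s₀ : G} (hS : ∀ σ ∈ S, σ - s₀ ∈ H) (x : G) : x ∈ H ∨ x - s₀ ∈ H := by
  have hreach := (SimpleGraph.reachable_iff_reflTransGen 0 x).1 (hconn.preconnected 0 x)
  induction hreach with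
  | refl => exact Or.inl H.zero_mem
  | @tail u v _ huv ih =>
    have hσ := hS _ huv.2
    rcases ih with hu | hu
    · right
      convert H.sub_mem hσ hu using 1
      abel
    · left
      convert H.sub_mem hσ hu using 1
      abel

theorem addCayley_add_self_mem {S : Set G} (hconn : (addCayley S).Connected)
    {H : AddSubgroup G} {s₀ : G} (hS : ∀ σ ∈ S, σ - s₀ ∈ H) (x : G) : x + x ∈ H := by
  have hcover := addCayley_mem_or_sub_mem hconn hS
  have hs₀ : s₀ + s₀ ∈ H := by
    rcases hcover (s₀ + s₀) with h | h
    · exact h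
    · simp only [add_sub_cancel_right] at h
      exact H.add_mem h h
  rcases hcover x with h | h
  · exact H.add_mem h h
  · convert H.add_mem (H.add_mem h h) hs₀ using 1
    abel

end

section
variable {G : Type*} [AddCommGroup G] [Fintype G] [DecidableEq G]

theorem exists_addSubgroup_of_forall_add_notMem {S A B : Finset G} (hA : A.Nonempty)
    (hB : B.Nonempty) (hAB : ∀ a ∈ A, ∀ b ∈ B, a + b ∉ S) {p : ℕ}
    (hp : ∀ H : AddSubgroup G, H ≠ ⊥ → p ≤ Nat.card H)
    (hS : #(A ∪ B)ᶜ + 2 ≤ #S) (hSp : #(A ∪ B)ᶜ < p) :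
    ∃ H : AddSubgroup G, ∃ b : G,
      (∀ σ ∈ S, ∀ σ' ∈ S, σ - σ' ∈ H) ∧ ∀ a ∈ A, ∀ σ ∈ S, σ - (a + b) ∉ H := by
  obtain ⟨A', b, hb, hAA', hsub, hcard⟩ := exists_vadd_subset_add_card_le_stabilizer hA hB
  set H := AddAction.stabilizer G A'
  have hSC : ∀ σ ∈ S, σ - b ∈ A'ᶜ := by
    intro σ hσ
    rw [mem_compl]
    intro hmem
    obtain ⟨a, ha, c, hc, hac⟩ := mem_add.1 (hsub (vadd_mem_vadd_finset hmem))
    exact hAB a ha c hc (by rwa [hac, vadd_eq_add, add_sub_cancel])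
  have hcompl : #A'ᶜ ≤ #(A ∪ B)ᶜ + Nat.card H := by
    have := card_union_le A B
    rw [card_compl, card_compl]
    omega
  have hSC' : #S ≤ #A'ᶜ :=
    card_le_card_of_injOn (· - b) hSC (fun x _ y _ h => sub_left_injective h)
  have hH : H ≠ ⊥ := by
    intro h
    rw [h, AddSubgroup.card_bot] at hcompl
    omega
  have hlt : #A'ᶜ < 2 * Nat.card (AddAction.stabilizer G A'ᶜ) := by
    rw [AddAction.stabilizer_finset_compl]
    change #A'ᶜ < 2 * Nat.card H
    have := hp H hH
    omega
  refine ⟨H, b, fun σ hσ σ' hσ' => ?_, fun a ha σ hσ hmem => ?_⟩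
  · have := AddAction.sub_mem_stabilizer_of_card_lt hlt (hSC σ hσ) (hSC σ' hσ')
    rwa [AddAction.stabilizer_finset_compl, sub_sub_sub_cancel_right] at this
  · have := AddAction.mem_stabilizer_finset'.1 hmem (hAA' ha)
    refine mem_compl.1 (hSC σ hσ) ?_
    convert this using 1
    rw [vadd_eq_add]
    abel

theorem min_le_card_compl_of_forall_add_notMem {S A B : Finset G}
    (hconn : (addCayley (S : Set G)).Connected) {p : ℕ}
    (hp : ∀ H : AddSubgroup G, H ≠ ⊥ → p ≤ Nat.card H) (hA : A.Nonempty) (hB : B.Nonempty)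
    (hAB : ∀ a ∈ A, ∀ b ∈ B, a + b ∉ S) :
    min (#S - 1) p ≤ #(A ∪ B)ᶜ := by
  by_contra! hlt
  rw [lt_min_iff] at hlt
  obtain ⟨H, b, hSH, hASH⟩ :=
    exists_addSubgroup_of_forall_add_notMem hA hB hAB hp (by omega) hlt.2
  obtain ⟨a, ha⟩ := hA
  have hSA : ∀ σ ∈ S, σ - a ∉ A := by
    intro σ hσ hσa
    have hcover := addCayley_mem_or_sub_mem hconn (fun τ hτ => hSH τ hτ σ hσ)
    have hAb : ∀ a' ∈ A, a' + b ∈ H := fun a' ha' =>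
      (hcover _).resolve_right fun h => hASH a' ha' σ hσ (by simpa using H.neg_mem h)
    have hσH : σ ∈ H := by
      convert H.sub_mem (H.add_mem (hAb a ha) (hAb _ hσa))
        (addCayley_add_self_mem hconn (fun τ hτ => hSH τ hτ σ hσ) b) using 1
      abel
    exact hASH a ha σ hσ (H.sub_mem hσH (hAb a ha))
  have hSB : ∀ σ ∈ S, σ - a ∉ B := fun σ hσ hσb => hAB a ha _ hσb (by simpa using hσ)
  have : #S ≤ #(A ∪ B)ᶜ := card_le_card_of_injOn (· - a)
    (fun σ hσ => by simp [hSA σ hσ, hSB σ hσ]) (fun x _ y _ h => sub_left_injective h)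
  omega

end

theorem SimpleGraph.exists_separation_of_not_connected_induce {V : Type*} {Γ : SimpleGraph V}
    {s : Set V} (hs : sᶜ.Nonempty) (h : ¬(Γ.induce sᶜ).Connected) :
    ∃ A B : Set V, A.Nonempty ∧ B.Nonempty ∧ Disjoint A B ∧ A ∪ B = sᶜ ∧
      ∀ a ∈ A, ∀ b ∈ B, ¬Γ.Adj a b := by
  have : Nonempty (sᶜ : Set V) := hs.to_subtype
  rw [connected_iff, and_iff_left ‹_›, Preconnected] at h
  push Not at h
  obtain ⟨u, v, huv⟩ := h
  set R := {x | (Γ.induce sᶜ).Reachable u x}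
  refine ⟨Subtype.val '' R, Subtype.val '' Rᶜ, ⟨u, u, Reachable.refl _, rfl⟩, ⟨v, v, huv, rfl⟩,
    Set.disjoint_image_iff Subtype.val_injective |>.2 disjoint_compl_right, ?_, ?_⟩
  · rw [← Set.image_union, Set.union_compl_self, Set.image_univ, Subtype.range_coe]
  · rintro _ ⟨x, hx, rfl⟩ _ ⟨y, hy, rfl⟩ hxy
    exact hy (hx.trans (Adj.reachable (by simpa using hxy)))

theorem corollary_charG_general {G : Type*} [AddCommGroup G] [Fintype G]
    (S : Set G)
    (hconn : (addCayley S).Connected)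
    (p : ℕ) (hp : p = sInf {n : ℕ | ∃ H : AddSubgroup G, H ≠ ⊥ ∧ Nat.card H = n}) :
    min (S.ncard - 1) p ≤ vertexConnectivity (addCayley S) := by
  classical
  have hpH (H : AddSubgroup G) (hH : H ≠ ⊥) : p ≤ Nat.card H := hp ▸ Nat.sInf_le ⟨H, hH, rfl⟩
  refine le_csInf ⟨_, Set.univ, rfl, Or.inl (by simp)⟩ ?_
  rintro _ ⟨s, rfl, hcut⟩
  have hsize := Set.ncard_add_ncard_compl s
  have hScard := Set.ncard_le_card S
  by_cases hsmall : sᶜ.ncard ≤ 1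
  · omega
  obtain ⟨A, B, hA, hB, hdisj, hunion, hsep⟩ :=
    SimpleGraph.exists_separation_of_not_connected_induce
      (Set.nonempty_of_ncard_ne_zero (by omega)) (hcut.resolve_left hsmall)
  have hAB : ∀ a ∈ A.toFinset, ∀ b ∈ B.toFinset, a + b ∉ S.toFinset := by
    simp only [Set.mem_toFinset]
    exact fun a ha b hb hab => hsep a ha b hb ⟨hdisj.ne_of_mem ha hb, hab⟩
  have key := min_le_card_compl_of_forall_add_notMem (by rwa [Set.coe_toFinset]) hpH
    (by simpa using hA) (by simpa using hB) hAB
  have hcompl : (A.toFinset ∪ B.toFinset)ᶜ = s.toFinset := by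
    ext x
    simp only [Finset.mem_compl, Finset.mem_union, Set.mem_toFinset, ← Set.mem_union, hunion,
      Set.mem_compl_iff, not_not]
  rwa [hcompl, ← Set.ncard_eq_toFinset_card', ← Set.ncard_eq_toFinset_card'] at key

/-- Corollary: if `G` is non-trivial, `Cay⁺(S)` is connected, and `p` is the smallest
order of a non-zero subgroup of `G`, then `κ(Cay⁺(S)) ≥ min{|S| − 1, p}`. -/
theorem corollary_charG {G : Type*} [AddCommGroup G] [Fintype G] [Nontrivial G]
    (S : Set G) (hS : S ≠ Set.univ)
    (hconn : (addCayley S).Connected)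
    (p : ℕ) (hp : p = sInf {n : ℕ | ∃ H : AddSubgroup G, H ≠ ⊥ ∧ Nat.card H = n}) :
    min (S.ncard - 1) p ≤ vertexConnectivity (addCayley S) :=
  corollary_charG_general S hconn p hp
end
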